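/- arXiv:2312.07118 — 8 statements merged into one kernel-verified Lean document; each statement's English description precedes it below -/
import Mathlib

section
/- For a binary quartic form f with coefficients z₀,…,z₄ as above over a field F of characteristic ≠ 2,3, the catalecticant J(f) = det of the 3×3 matrix [[z₀,z₁,z₂],[z₁,z₂,z₃],[z₂,z₃,z₄]] satisfies J(g·f) = det(g)⁻⁶ J(f) for all g ∈ GL₂(F). -/
noncomputable section
open MvPolynomial

/-- The binary quartic form `z₀Y⁴ - 4z₁Y³X + 6z₂Y²X² - 4z₃YX³ + z₄X⁴`,
where `X 0` plays the role of `X` and `X 1` the role of `Y`. -/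
def quartic {F : Type*} [Field F] (z : Fin 5 → F) : MvPolynomial (Fin 2) F :=
  C (z 0) * X 1 ^ 4 - 4 * C (z 1) * X 1 ^ 3 * X 0 + 6 * C (z 2) * X 1 ^ 2 * X 0 ^ 2
    - 4 * C (z 3) * X 1 * X 0 ^ 3 + C (z 4) * X 0 ^ 4

/-- The substitution `f(X, Y) ↦ f(dX - bY, aY - cX)` for `g = [[a,b],[c,d]]`. -/
def quarticAct {F : Type*} [Field F] (a b c d : F) (f : MvPolynomial (Fin 2) F) :
    MvPolynomial (Fin 2) F :=
  bind₁ (fun i : Fin 2 => if i = 0 then C d * X 0 - C b * X 1 else C a * X 1 - C c * X 0) f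

/-- The catalecticant invariant `J(f) = det [[z₀,z₁,z₂],[z₁,z₂,z₃],[z₂,z₃,z₄]]`. -/
def catJ {F : Type*} [Field F] (z : Fin 5 → F) : F :=
  Matrix.det !![z 0, z 1, z 2; z 1, z 2, z 3; z 2, z 3, z 4]

lemma X_eq_mono {F : Type*} [Field F] (s : Fin 2) :
    (X s : MvPolynomial (Fin 2) F) = monomial (Finsupp.single s 1) 1 := by
  rw [← X_pow_eq_monomial, pow_one]

lemma quartic_eq' {F : Type*} [Field F] (z : Fin 5 → F) : quartic z =
    C (z 0) * X 1 ^ 4 - C (4 * z 1) * X 1 ^ 3 * X 0 ^ 1 + C (6 * z 2) * X 1 ^ 2 * X 0 ^ 2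
      - C (4 * z 3) * X 1 ^ 1 * X 0 ^ 3 + C (z 4) * X 0 ^ 4 := by
  simp only [quartic, C_mul, map_ofNat]
  ring

lemma quartic_inj {F : Type*} [Field F] (h2 : (2 : F) ≠ 0) (h3 : (3 : F) ≠ 0)
    {u v : Fin 5 → F} (h : quartic u = quartic v) : ∀ i, u i = v i := by
  have h4 : (4 : F) ≠ 0 := by
    have : (4 : F) = 2 * 2 := by norm_num
    rw [this]; exact mul_ne_zero h2 h2
  have h6 : (6 : F) ≠ 0 := by
    have : (6 : F) = 2 * 3 := by norm_num
    rw [this]; exact mul_ne_zero h2 h3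
  rw [quartic_eq', quartic_eq'] at h
  have e0 := congrArg (coeff (Finsupp.single 1 4)) h
  have e1 := congrArg (coeff (Finsupp.single 1 3 + Finsupp.single 0 1)) h
  have e2 := congrArg (coeff (Finsupp.single 1 2 + Finsupp.single 0 2)) h
  have e3 := congrArg (coeff (Finsupp.single 1 1 + Finsupp.single 0 3)) h
  have e4 := congrArg (coeff (Finsupp.single 0 4)) h
  simp only [coeff_sub, coeff_add, mul_assoc, X_eq_mono, X_pow_eq_monomial, monomial_pow,
    monomial_mul, coeff_C_mul, coeff_monomial, one_pow, mul_one, one_mul,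
    Finsupp.ext_iff, Fin.forall_fin_two, Finsupp.add_apply, Finsupp.single_apply] at e0 e1 e2 e3 e4
  norm_num at e0 e1 e2 e3 e4
  intro i
  fin_cases i
  · exact e0
  · exact e1.resolve_right h4
  · exact e2.resolve_right h6
  · exact e3.resolve_right h4
  · exact e4

lemma smul_quartic {F : Type*} [Field F] (k : F) (u : Fin 5 → F) :
    C k * quartic u = quartic (fun i => k * u i) := by
  simp only [quartic, C_mul]
  ring

lemma act_quartic {F : Type*} [Field F] (a b c d : F) (z : Fin 5 → F) :
    quarticAct a b c d (quartic z) = quartic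
      ![b^4*z 4 + 4*a*b^3*z 3 + 6*a^2*b^2*z 2 + 4*a^3*b*z 1 + a^4*z 0,
        b^3*d*z 4 + b^3*c*z 3 + 3*a*b^2*d*z 3 + 3*a*b^2*c*z 2 + 3*a^2*b*d*z 2 + 3*a^2*b*c*z 1
          + a^3*d*z 1 + a^3*c*z 0,
        b^2*d^2*z 4 + 2*b^2*c*d*z 3 + b^2*c^2*z 2 + 2*a*b*d^2*z 3 + 4*a*b*c*d*z 2
          + 2*a*b*c^2*z 1 + a^2*d^2*z 2 + 2*a^2*c*d*z 1 + a^2*c^2*z 0,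
        b*d^3*z 4 + 3*b*c*d^2*z 3 + 3*b*c^2*d*z 2 + b*c^3*z 1 + a*d^3*z 3 + 3*a*c*d^2*z 2
          + 3*a*c^2*d*z 1 + a*c^3*z 0,
        d^4*z 4 + 4*c*d^3*z 3 + 6*c^2*d^2*z 2 + 4*c^3*d*z 1 + c^4*z 0] := by
  simp only [quarticAct, quartic, map_add, map_sub, map_mul, map_pow, map_ofNat,
    bind₁_X_right, algHom_C, Matrix.cons_val_zero, Matrix.cons_val_one, Matrix.head_cons,
    Matrix.cons_val_fin_one, Fin.isValue, if_true, if_neg, Matrix.cons_val]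
  norm_num
  ring

/-- `J(g·f) = det(g)⁻⁶ J(f)`. -/
theorem stmt1 {F : Type*} [Field F] (h2 : (2 : F) ≠ 0) (h3 : (3 : F) ≠ 0)
    (z w : Fin 5 → F) (a b c d : F) (hdet : a * d - b * c ≠ 0)
    (hact : C (((a * d - b * c)⁻¹) ^ 4) * quarticAct a b c d (quartic z) = quartic w) :
    catJ w = ((a * d - b * c)⁻¹) ^ 6 * catJ z := by
  rw [act_quartic, smul_quartic] at hact
  have hw := quartic_inj h2 h3 hact
  have h0 := (hw 0).symm
  have h1 := (hw 1).symm
  have hc2 := (hw 2).symm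
  have hc3 := (hw 3).symm
  have h4 := (hw 4).symm
  simp only [Matrix.cons_val_zero, Matrix.cons_val_one, Matrix.head_cons,
    Matrix.cons_val_fin_one, Fin.isValue, Matrix.cons_val] at h0 h1 hc2 hc3 h4
  simp only [catJ, Matrix.det_fin_three, Matrix.cons_val', Matrix.cons_val_zero,
    Matrix.cons_val_one, Matrix.head_cons, Matrix.head_fin_const, Matrix.cons_val_two,
    Matrix.tail_cons, Matrix.empty_val', Matrix.cons_val_fin_one, h0, h1, hc2, hc3, h4,
    Matrix.of_apply, Matrix.cons_val]
  field_simp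
  ring
end
end

section
/- A binary quartic form f = z₀Y⁴ - 4z₁Y³X + 6z₂Y²X² - 4z₃YX³ + z₄X⁴ over an algebraically closed field of characteristic ≠ 2,3 has a repeated linear factor if and only if its discriminant Δ(f) = I(f)³ - J(f)² vanishes, where I(f) = (z₀z₄ - 4z₁z₃ + 3z₂²)/3 and J(f) = det[[z₀,z₁,z₂],[z₁,z₂,z₃],[z₂,z₃,z₄]]. -/
noncomputable section
open MvPolynomial

/-- The apolar invariant `I(f) = (z₀z₄ - 4z₁z₃ + 3z₂²)/3`. -/
def apolarI {F : Type*} [Field F] (z : Fin 5 → F) : F :=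
  (z 0 * z 4 - 4 * z 1 * z 3 + 3 * z 2 ^ 2) / 3

namespace UnivariateAux
open Polynomial

/-- Factorization of a quartic univariate polynomial over an algebraically closed field,
with coefficient relations and a pointwise form. -/
lemma key4 {F : Type*} [Field F] [IsAlgClosed F] (a b c d e : F) (ha : a ≠ 0) :
    ∃ r1 r2 r3 r4 : F,
      b = -a * (r1+r2+r3+r4) ∧ c = a * (r1*r2+r1*r3+r1*r4+r2*r3+r2*r4+r3*r4)
      ∧ d = -a * (r1*r2*r3+r1*r2*r4+r1*r3*r4+r2*r3*r4) ∧ e = a * (r1*r2*r3*r4)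
      ∧ ∀ u : F, a*u^4+b*u^3+c*u^2+d*u+e = a*((u-r1)*(u-r2)*(u-r3)*(u-r4)) := by
  set p : F[X] := Polynomial.C a * Polynomial.X^4 + Polynomial.C b * Polynomial.X^3
    + Polynomial.C c * Polynomial.X^2 + Polynomial.C d * Polynomial.X + Polynomial.C e with hp
  have hdeg : p.natDegree = 4 := by rw [hp]; compute_degree!
  have hsplit : Splits p := IsAlgClosed.splits p
  have hcard : Multiset.card p.roots = 4 := by
    rw [splits_iff_card_roots.mp hsplit, hdeg]
  have hne : p.roots ≠ 0 := by
    intro h; rw [h] at hcard; simp at hcard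
  obtain ⟨r1, hr1⟩ := Multiset.exists_mem_of_ne_zero hne
  obtain ⟨s3, hs⟩ := Multiset.exists_cons_of_mem hr1
  have hcard3 : Multiset.card s3 = 3 := by
    have := hcard; rw [hs] at this; simpa using this
  obtain ⟨r2, r3, r4, rfl⟩ := Multiset.card_eq_three.mp hcard3
  have hlc : p.leadingCoeff = a := by
    rw [Polynomial.leadingCoeff, hdeg, hp]
    simp [Polynomial.coeff_X_pow, Polynomial.coeff_C]
  have h := hsplit.eq_prod_roots
  rw [hs, hlc] at h
  have hfac : p = Polynomial.C a * ((Polynomial.X - Polynomial.C r1)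
      * (Polynomial.X - Polynomial.C r2) * (Polynomial.X - Polynomial.C r3)
      * (Polynomial.X - Polynomial.C r4)) := by
    rw [h]
    simp only [Multiset.insert_eq_cons, Multiset.map_cons, Multiset.prod_cons,
      Multiset.map_singleton, Multiset.prod_singleton]
    ring
  have hexp : (Polynomial.C a * ((Polynomial.X - Polynomial.C r1)
      * (Polynomial.X - Polynomial.C r2) * (Polynomial.X - Polynomial.C r3)
      * (Polynomial.X - Polynomial.C r4)) : F[X]) =
      Polynomial.C a * Polynomial.X^4 + Polynomial.C (-a * (r1+r2+r3+r4)) * Polynomial.X^3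
        + Polynomial.C (a * (r1*r2+r1*r3+r1*r4+r2*r3+r2*r4+r3*r4)) * Polynomial.X^2
        + Polynomial.C (-a * (r1*r2*r3+r1*r2*r4+r1*r3*r4+r2*r3*r4)) * Polynomial.X
        + Polynomial.C (a * (r1*r2*r3*r4)) := by
    simp only [map_mul, map_add, map_neg]
    ring
  rw [hexp] at hfac
  have hco : ∀ k, p.coeff k =
      (Polynomial.C a * Polynomial.X^4 + Polynomial.C (-a * (r1+r2+r3+r4)) * Polynomial.X^3
        + Polynomial.C (a * (r1*r2+r1*r3+r1*r4+r2*r3+r2*r4+r3*r4)) * Polynomial.X^2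
        + Polynomial.C (-a * (r1*r2*r3+r1*r2*r4+r1*r3*r4+r2*r3*r4)) * Polynomial.X
        + Polynomial.C (a * (r1*r2*r3*r4))).coeff k := fun k => by rw [hfac]
  have e3 := hco 3
  have e2 := hco 2
  have e1 := hco 1
  have e0 := hco 0
  simp only [hp, Polynomial.coeff_add, Polynomial.coeff_C_mul, Polynomial.coeff_X_pow, Polynomial.coeff_X, Polynomial.coeff_C] at e3 e2 e1 e0
  norm_num at e3 e2 e1 e0
  refine ⟨r1, r2, r3, r4, by linear_combination e3, by linear_combination e2,
    by linear_combination e1, by linear_combination e0, fun u => ?_⟩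
  have := congrArg (Polynomial.eval u) (hfac.trans hexp.symm)
  rw [hp] at this
  simp only [Polynomial.eval_add, Polynomial.eval_mul, Polynomial.eval_pow, Polynomial.eval_C, Polynomial.eval_X, Polynomial.eval_sub] at this
  linear_combination this

/-- Factorization of a cubic univariate polynomial over an algebraically closed field. -/
lemma key3 {F : Type*} [Field F] [IsAlgClosed F] (a b c d : F) (ha : a ≠ 0) :
    ∃ r1 r2 r3 : F,
      b = -a * (r1+r2+r3) ∧ c = a * (r1*r2+r1*r3+r2*r3) ∧ d = -a * (r1*r2*r3)
      ∧ ∀ u : F, a*u^3+b*u^2+c*u+d = a*((u-r1)*(u-r2)*(u-r3)) := by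
  set p : F[X] := Polynomial.C a * Polynomial.X^3 + Polynomial.C b * Polynomial.X^2
    + Polynomial.C c * Polynomial.X + Polynomial.C d with hp
  have hdeg : p.natDegree = 3 := by rw [hp]; compute_degree!
  have hsplit : Splits p := IsAlgClosed.splits p
  have hcard : Multiset.card p.roots = 3 := by
    rw [splits_iff_card_roots.mp hsplit, hdeg]
  obtain ⟨r1, r2, r3, hs⟩ := Multiset.card_eq_three.mp hcard
  have hlc : p.leadingCoeff = a := by
    rw [Polynomial.leadingCoeff, hdeg, hp]
    simp [Polynomial.coeff_X_pow, Polynomial.coeff_C]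
  have h := hsplit.eq_prod_roots
  rw [hs, hlc] at h
  have hfac : p = Polynomial.C a * ((Polynomial.X - Polynomial.C r1)
      * (Polynomial.X - Polynomial.C r2) * (Polynomial.X - Polynomial.C r3)) := by
    rw [h]
    simp only [Multiset.insert_eq_cons, Multiset.map_cons, Multiset.prod_cons,
      Multiset.map_singleton, Multiset.prod_singleton]
    ring
  have hexp : (Polynomial.C a * ((Polynomial.X - Polynomial.C r1)
      * (Polynomial.X - Polynomial.C r2) * (Polynomial.X - Polynomial.C r3)) : F[X]) =
      Polynomial.C a * Polynomial.X^3 + Polynomial.C (-a * (r1+r2+r3)) * Polynomial.X^2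
        + Polynomial.C (a * (r1*r2+r1*r3+r2*r3)) * Polynomial.X
        + Polynomial.C (-a * (r1*r2*r3)) := by
    simp only [map_mul, map_add, map_neg]
    ring
  rw [hexp] at hfac
  have hco : ∀ k, p.coeff k =
      (Polynomial.C a * Polynomial.X^3 + Polynomial.C (-a * (r1+r2+r3)) * Polynomial.X^2
        + Polynomial.C (a * (r1*r2+r1*r3+r2*r3)) * Polynomial.X
        + Polynomial.C (-a * (r1*r2*r3))).coeff k :=
    fun k => by rw [hfac]
  have e2 := hco 2
  have e1 := hco 1
  have e0 := hco 0
  simp only [hp, Polynomial.coeff_add, Polynomial.coeff_C_mul, Polynomial.coeff_X_pow, Polynomial.coeff_X, Polynomial.coeff_C] at e2 e1 e0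
  norm_num at e2 e1 e0
  refine ⟨r1, r2, r3, by linear_combination e2, by linear_combination e1,
    by linear_combination e0, fun u => ?_⟩
  have := congrArg (Polynomial.eval u) (hfac.trans hexp.symm)
  rw [hp] at this
  simp only [Polynomial.eval_add, Polynomial.eval_mul, Polynomial.eval_pow, Polynomial.eval_C, Polynomial.eval_X, Polynomial.eval_sub] at this
  linear_combination this

end UnivariateAux

open UnivariateAux

lemma quartic_eq_Cform {F : Type*} [Field F] (z : Fin 5 → F) :
    quartic z = C (z 0) * X 1^4 + C (-4 * z 1) * X 1^3 * X 0 + C (6 * z 2) * X 1^2 * X 0^2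
      + C (-4 * z 3) * X 1 * X 0^3 + C (z 4) * X 0^4 := by
  rw [quartic]; simp only [map_mul, map_neg, map_ofNat]; ring

lemma pderiv0_quartic {F : Type*} [Field F] (z : Fin 5 → F) :
    pderiv 0 (quartic z) =
    C (-4*z 1) * X 1^3 + C (12*z 2) * X 1^2 * X 0 + C (-12*z 3) * X 1 * X 0^2
      + C (4*z 4) * X 0^3 := by
  rw [quartic_eq_Cform]
  simp only [map_add, pderiv_mul, pderiv_pow, pderiv_X_self,
    pderiv_X_of_ne (show (1:Fin 2) ≠ 0 by decide), pderiv_C]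
  simp only [map_mul, map_neg, map_ofNat, Nat.cast_ofNat]
  ring

lemma pderiv1_quartic {F : Type*} [Field F] (z : Fin 5 → F) :
    pderiv 1 (quartic z) =
    C (4*z 0) * X 1^3 + C (-12*z 1) * X 1^2 * X 0 + C (12*z 2) * X 1 * X 0^2
      + C (-4*z 3) * X 0^3 := by
  rw [quartic_eq_Cform]
  simp only [map_add, pderiv_mul, pderiv_pow, pderiv_X_self,
    pderiv_X_of_ne (show (0:Fin 2) ≠ 1 by decide), pderiv_C]
  simp only [map_mul, map_neg, map_ofNat, Nat.cast_ofNat]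
  ring

lemma catJ_eq {F : Type*} [Field F] (z : Fin 5 → F) :
    catJ z = z 0*z 2*z 4 - z 0*z 3^2 - z 1^2*z 4 + 2*z 1*z 2*z 3 - z 2^3 := by
  rw [catJ, Matrix.det_fin_three]
  norm_num [Matrix.cons_val_zero, Matrix.cons_val_one, Matrix.head_cons, Matrix.cons_val_two, Matrix.tail_cons]
  ring

set_option maxHeartbeats 1000000 in
/-- over an algebraically closed field of characteristic ≠ 2,3, a nonzero
binary quartic form has a repeated linear factor iff `Δ(f) = I(f)³ - J(f)² = 0`. -/
theorem stmt2 {F : Type*} [Field F] [IsAlgClosed F] (h2 : (2 : F) ≠ 0) (h3 : (3 : F) ≠ 0)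
    (z : Fin 5 → F) (hz : quartic z ≠ 0) :
    (∃ s t : F, (s ≠ 0 ∨ t ≠ 0) ∧ (C t * X 0 - C s * X 1) ^ 2 ∣ quartic z) ↔
      apolarI z ^ 3 - catJ z ^ 2 = 0 := by
  have h4 : (4 : F) ≠ 0 := by
    intro h; apply h2
    have : (4 : F) = 2 * 2 := by norm_num
    rw [this] at h
    rcases mul_eq_zero.mp h with h | h <;> exact h
  have h6 : (6 : F) ≠ 0 := by
    intro h; apply h3
    have : (6 : F) = 2 * 3 := by norm_num
    rw [this] at h
    rcases mul_eq_zero.mp h with h | h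
    · exact absurd h h2
    · exact h
  constructor
  · rintro ⟨s, t, hst, q, hfq⟩
    by_cases ht : t = 0
    · subst ht
      -- repeated factor is X1²; then z3 = z4 = 0.
      have hL : eval ![(1:F), 0] (C (0:F) * X 0 - C s * X 1) = 0 := by simp
      have hz4 : z 4 = 0 := by
        have hE : eval ![(1:F), 0] (quartic z) = 0 := by
          rw [hfq, eval_mul, eval_pow, hL]; ring
        rw [quartic_eq_Cform] at hE
        simpa using hE
      have hz3 : z 3 = 0 := by
        have hE : eval ![(1:F), 0] (pderiv 1 (quartic z)) = 0 := by
          rw [hfq, pow_two, pderiv_mul, pderiv_mul]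
          simp only [eval_add, eval_mul, hL]
          ring
        rw [pderiv1_quartic] at hE
        simp at hE
        rcases hE with hE | hE
        · exact absurd hE h4
        · exact hE
      rw [apolarI, catJ_eq, hz3, hz4]
      field_simp
      ring
    · -- t ≠ 0, root r = s/t with multiplicity ≥ 2
      obtain ⟨r, hrr⟩ : ∃ r : F, r = s / t := ⟨_, rfl⟩
      have hrt : t * r = s := by rw [hrr]; field_simp
      have hL : eval ![r, (1:F)] (C t * X 0 - C s * X 1) = 0 := by
        simp
        linear_combination hrt
      have hE1 : eval ![r, (1:F)] (quartic z) = 0 := by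
        rw [hfq, eval_mul, eval_pow, hL]; ring
      have hE2 : eval ![r, (1:F)] (pderiv 0 (quartic z)) = 0 := by
        rw [hfq, pow_two, pderiv_mul, pderiv_mul]
        simp only [eval_add, eval_mul, hL]
        ring
      rw [quartic_eq_Cform] at hE1
      rw [pderiv0_quartic] at hE2
      simp only [eval_add, eval_mul, eval_pow, eval_C, eval_X, Matrix.cons_val_zero,
        Matrix.cons_val_one, Matrix.head_cons] at hE1 hE2
      have hz1 : z 1 = 3*z 2*r - 3*z 3*r^2 + z 4*r^3 := by
        apply mul_left_cancel₀ h4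
        linear_combination -hE2
      have hz0 : z 0 = 6*z 2*r^2 - 8*z 3*r^3 + 3*z 4*r^4 := by
        linear_combination hE1 + 4*r*hz1
      rw [apolarI, catJ_eq, hz0, hz1]
      field_simp
      ring
  · intro hΔ
    have sq0 : ∀ w v : F, (w - v)^2 = 0 → w = v := fun w v h =>
      sub_eq_zero.mp (pow_eq_zero_iff (n := 2) (by norm_num) |>.mp h)
    have hN : z 0*z 4 - 4*z 1*z 3 + 3*z 2^2 = 3*apolarI z := by
      rw [apolarI]; field_simp
    have hzero : (z 0*z 4 - 4*z 1*z 3 + 3*z 2^2)^3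
        - 27*(z 0*z 2*z 4 - z 0*z 3^2 - z 1^2*z 4 + 2*z 1*z 2*z 3 - z 2^3)^2 = 0 := by
      rw [← catJ_eq, hN]
      linear_combination 27*hΔ
    rcases eq_or_ne (z 4) 0 with hz4 | hz4
    · rcases eq_or_ne (z 3) 0 with hz3 | hz3
      · -- y² divides f
        refine ⟨1, 0, Or.inl one_ne_zero,
          C (z 0) * X 1^2 - 4 * C (z 1) * X 1 * X 0 + 6 * C (z 2) * X 0^2, ?_⟩
        rw [quartic, hz3, hz4]
        simp only [map_zero, map_one]
        ring
      · -- cubic case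
        obtain ⟨r1, r2, r3, hb, hc, hd, hev⟩ := key3 (-4*z 3) (6*z 2) (-4*z 1) (z 0)
          (by simpa using ⟨h4, hz3⟩)
        obtain ⟨E1, hE1⟩ : ∃ w : F, w = r1+r2+r3 := ⟨_, rfl⟩
        obtain ⟨E2, hE2⟩ : ∃ w : F, w = r1*r2+r1*r3+r2*r3 := ⟨_, rfl⟩
        obtain ⟨E3, hE3⟩ : ∃ w : F, w = r1*r2*r3 := ⟨_, rfl⟩
        have hd2 : 6*z 2 = 4*z 3*E1 := by rw [hE1]; linear_combination hb
        have hd1 : z 1 = z 3*E2 := by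
          rw [hE2]
          apply mul_left_cancel₀ (show (-4:F) ≠ 0 by simpa using h4)
          linear_combination hc
        have hd0 : z 0 = 4*z 3*E3 := by rw [hE3]; linear_combination hd
        have hbig : 16*(z 3^6 * (E1^2*E2^2 - 4*E2^3 - 4*E1^3*E3 + 18*E1*E2*E3 - 27*E3^2)) = 0 := by
          linear_combination ((54)*(z 1)^2*(z 2)^3 + (-108)*(z 1)^3*(z 2)*(z 3) + (27)*(z 1)^4*(z 4) + (-81)*(z 0)*(z 2)^4 + (180)*(z 0)*(z 1)*(z 2)^2*(z 3) + (6)*(z 0)*(z 1)^2*(z 3)^2 + (-54)*(z 0)*(z 1)^2*(z 2)*(z 4) + (-54)*(z 0)^2*(z 2)*(z 3)^2 + (18)*(z 0)^2*(z 2)^2*(z 4) + (12)*(z 0)^2*(z 1)*(z 3)*(z 4) + (-1)*(z 0)^3*(z 4)^2)*hz4 + ((108)*(z 3)^5*(E3) + (54)*(z 2)^3*(z 3)^2 + (-108)*(z 1)*(z 2)*(z 3)^3 + (27)*(z 0)*(z 3)^4)*hd0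
            + ((64)*(z 3)^5*(E2)^2 + (-432)*(z 2)*(z 3)^4*(E3) + (-36)*(z 2)^2*(z 3)^3*(E2) + (64)*(z 1)*(z 3)^4*(E2) + (-36)*(z 1)*(z 2)^2*(z 3)^2 + (64)*(z 1)^2*(z 3)^3)*hd1 + ((-72)*(z 3)^5*(E2)*(E3) + (-4)*(z 3)^5*(E1)*(E2)^2 + (16)*(z 3)^5*(E1)^2*(E3) + (-6)*(z 2)*(z 3)^4*(E2)^2 + (24)*(z 2)*(z 3)^4*(E1)*(E3) + (36)*(z 2)^2*(z 3)^3*(E3))*hd2 + hzero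
        have h16 : (16:F) ≠ 0 := by
          intro h; apply h4
          have h' : (16:F) = 4 * 4 := by norm_num
          rw [h'] at h
          rcases mul_eq_zero.mp h with h | h <;> exact h
        have hP0 : (E1^2*E2^2 - 4*E2^3 - 4*E1^3*E3 + 18*E1*E2*E3 - 27*E3^2) = 0 := by
          rcases mul_eq_zero.mp hbig with h | h
          · exact absurd h h16
          rcases mul_eq_zero.mp h with h | h
          · exact absurd h (pow_ne_zero _ hz3)
          · exact h
        have hPr : (E1^2*E2^2 - 4*E2^3 - 4*E1^3*E3 + 18*E1*E2*E3 - 27*E3^2) = (r1-r2)^2*(r1-r3)^2*(r2-r3)^2 := by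
          rw [hE1, hE2, hE3]; ring
        have hprod : (r1-r2)^2*(r1-r3)^2*(r2-r3)^2 = 0 := by rw [← hPr]; exact hP0
        have hmv : quartic z = C (-4*z 3) *
            ((X 0 - C r1 * X 1) * (X 0 - C r2 * X 1) * (X 0 - C r3 * X 1)) * X 1 := by
          rw [quartic_eq_Cform, hz4, hb, hc, hd]
          simp only [map_mul, map_add, map_neg, map_ofNat, map_zero]
          ring
        have hcase : r1 = r2 ∨ r1 = r3 ∨ r2 = r3 := by
          rcases mul_eq_zero.mp hprod with h | h
          · rcases mul_eq_zero.mp h with h | h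
            · exact Or.inl (sq0 _ _ h)
            · exact Or.inr (Or.inl (sq0 _ _ h))
          · exact Or.inr (Or.inr (sq0 _ _ h))
        rcases hcase with h | h | h
        · exact ⟨r1, 1, Or.inr one_ne_zero,
            C (-4*z 3) * (X 0 - C r3 * X 1) * X 1,
            by rw [hmv, ← h]; simp only [map_one]; ring⟩
        · exact ⟨r1, 1, Or.inr one_ne_zero,
            C (-4*z 3) * (X 0 - C r2 * X 1) * X 1,
            by rw [hmv, ← h]; simp only [map_one]; ring⟩
        · exact ⟨r2, 1, Or.inr one_ne_zero,
            C (-4*z 3) * (X 0 - C r1 * X 1) * X 1,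
            by rw [hmv, ← h]; simp only [map_one]; ring⟩
    · -- quartic case, z4 ≠ 0
      obtain ⟨r1, r2, r3, r4, hb, hc, hd, he, hev⟩ := key4 (z 4) (-4*z 3) (6*z 2) (-4*z 1) (z 0)
        hz4
      obtain ⟨E1, hE1⟩ : ∃ w : F, w = r1+r2+r3+r4 := ⟨_, rfl⟩
      obtain ⟨E2, hE2⟩ : ∃ w : F, w = r1*r2+r1*r3+r1*r4+r2*r3+r2*r4+r3*r4 := ⟨_, rfl⟩
      obtain ⟨E3, hE3⟩ : ∃ w : F, w = r1*r2*r3+r1*r2*r4+r1*r3*r4+r2*r3*r4 := ⟨_, rfl⟩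
      obtain ⟨E4, hE4⟩ : ∃ w : F, w = r1*r2*r3*r4 := ⟨_, rfl⟩
      have hb2 : 4*z 3 = z 4 * E1 := by rw [hE1]; linear_combination -hb
      have hc2 : 6*z 2 = z 4 * E2 := by rw [hE2]; linear_combination hc
      have hd2 : 4*z 1 = z 4 * E3 := by rw [hE3]; linear_combination -hd
      have he2 : z 0 = z 4 * E4 := by rw [hE4]; linear_combination he
      have hbig : z 4^6 * (256*E4^3 - 27*E3^4 + 144*E2*E3^2*E4 - 128*E2^2*E4^2 - 4*E2^3*E3^2 + 16*E2^4*E4 - 192*E1*E3*E4^2 + 18*E1*E2*E3^3 - 80*E1*E2^2*E3*E4 - 6*E1^2*E3^2*E4 + 144*E1^2*E2*E4^2 + E1^2*E2^2*E3^2 - 4*E1^2*E2^3*E4 - 4*E1^3*E3^3 + 18*E1^3*E2*E3*E4 - 27*E1^4*E4^2) = 0 := by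
        linear_combination ((-256)*(z 4)^5*(E4)^2 + (6912)*(z 3)^4*(z 4)*(E4) + (-13824)*(z 2)*(z 3)^2*(z 4)^2*(E4) + (4608)*(z 2)^2*(z 4)^3*(E4) + (13824)*(z 2)^3*(z 3)^2 + (-20736)*(z 2)^4*(z 4) + (3072)*(z 1)*(z 3)*(z 4)^3*(E4) + (-27648)*(z 1)*(z 2)*(z 3)^3 + (46080)*(z 1)*(z 2)^2*(z 3)*(z 4) + (1536)*(z 1)^2*(z 3)^2*(z 4) + (-13824)*(z 1)^2*(z 2)*(z 4)^2 + (-256)*(z 0)*(z 4)^4*(E4) + (6912)*(z 0)*(z 3)^4 + (-13824)*(z 0)*(z 2)*(z 3)^2*(z 4) + (4608)*(z 0)*(z 2)^2*(z 4)^2 + (3072)*(z 0)*(z 1)*(z 3)*(z 4)^2 + (-256)*(z 0)^2*(z 4)^3)*he2 + ((27)*(z 4)^5*(E3)^3 + (768)*(z 3)*(z 4)^4*(E4)^2 + (96)*(z 3)^2*(z 4)^3*(E3)*(E4) + (256)*(z 3)^3*(z 4)^2*(E3)^2 + (-864)*(z 2)*(z 4)^4*(E3)*(E4) + (-432)*(z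 2)*(z 3)*(z 4)^3*(E3)^2 + (-6912)*(z 2)*(z 3)^3*(z 4)*(E4) + (11520)*(z 2)^2*(z 3)*(z 4)^2*(E4) + (-576)*(z 2)^2*(z 3)^2*(z 4)*(E3) + (864)*(z 2)^3*(z 4)^2*(E3) + (108)*(z 1)*(z 4)^4*(E3)^2 + (384)*(z 1)*(z 3)^2*(z 4)^2*(E4) + (1024)*(z 1)*(z 3)^3*(z 4)*(E3) + (-3456)*(z 1)*(z 2)*(z 4)^3*(E4) + (-1728)*(z 1)*(z 2)*(z 3)*(z 4)^2*(E3) + (-2304)*(z 1)*(z 2)^2*(z 3)^2 + (3456)*(z 1)*(z 2)^3*(z 4) + (432)*(z 1)^2*(z 4)^3*(E3) + (4096)*(z 1)^2*(z 3)^3 + (-6912)*(z 1)^2*(z 2)*(z 3)*(z 4) + (1728)*(z 1)^3*(z 4)^2)*hd2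
          + ((-144)*(z 4)^5*(E3)^2*(E4) + (128)*(z 4)^5*(E2)*(E4)^2 + (4)*(z 4)^5*(E2)^2*(E3)^2 + (-16)*(z 4)^5*(E2)^3*(E4) + (-72)*(z 3)*(z 4)^4*(E3)^3 + (320)*(z 3)*(z 4)^4*(E2)*(E3)*(E4) + (-2304)*(z 3)^2*(z 4)^3*(E4)^2 + (-16)*(z 3)^2*(z 4)^3*(E2)*(E3)^2 + (64)*(z 3)^2*(z 4)^3*(E2)^2*(E4) + (-1152)*(z 3)^3*(z 4)^2*(E3)*(E4) + (768)*(z 2)*(z 4)^4*(E4)^2 + (24)*(z 2)*(z 4)^4*(E2)*(E3)^2 + (-96)*(z 2)*(z 4)^4*(E2)^2*(E4) + (1920)*(z 2)*(z 3)*(z 4)^3*(E3)*(E4) + (-96)*(z 2)*(z 3)^2*(z 4)^2*(E3)^2 + (384)*(z 2)*(z 3)^2*(z 4)^2*(E2)*(E4) + (144)*(z 2)^2*(z 4)^3*(E3)^2 + (-576)*(z 2)^2*(z 4)^3*(E2)*(E4) + (2304)*(z 2)^2*(z 3)^2*(z 4)*(E4) + (-3456)*(z 2)^3*(z 4)^2*(E4))*hc2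 + ((192)*(z 4)^5*(E3)*(E4)^2 + (-18)*(z 4)^5*(E2)*(E3)^3 + (80)*(z 4)^5*(E2)^2*(E3)*(E4) + (6)*(z 4)^5*(E1)*(E3)^2*(E4) + (-144)*(z 4)^5*(E1)*(E2)*(E4)^2 + (-1)*(z 4)^5*(E1)*(E2)^2*(E3)^2 + (4)*(z 4)^5*(E1)*(E2)^3*(E4) + (4)*(z 4)^5*(E1)^2*(E3)^3 + (-18)*(z 4)^5*(E1)^2*(E2)*(E3)*(E4) + (27)*(z 4)^5*(E1)^3*(E4)^2 + (24)*(z 3)*(z 4)^4*(E3)^2*(E4) + (-576)*(z 3)*(z 4)^4*(E2)*(E4)^2 + (-4)*(z 3)*(z 4)^4*(E2)^2*(E3)^2 + (16)*(z 3)*(z 4)^4*(E2)^3*(E4) + (16)*(z 3)*(z 4)^4*(E1)*(E3)^3 + (-72)*(z 3)*(z 4)^4*(E1)*(E2)*(E3)*(E4) + (108)*(z 3)*(z 4)^4*(E1)^2*(E4)^2 + (64)*(z 3)^2*(z 4)^3*(E3)^3 + (-288)*(z 3)^2*(z 4)^3*(E2)*(E3)*(E4) + (432)*(z 3)^2*(z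 4)^3*(E1)*(E4)^2 + (1728)*(z 3)^3*(z 4)^2*(E4)^2)*hb2 + 256*hzero
      have hP0 : (256*E4^3 - 27*E3^4 + 144*E2*E3^2*E4 - 128*E2^2*E4^2 - 4*E2^3*E3^2 + 16*E2^4*E4 - 192*E1*E3*E4^2 + 18*E1*E2*E3^3 - 80*E1*E2^2*E3*E4 - 6*E1^2*E3^2*E4 + 144*E1^2*E2*E4^2 + E1^2*E2^2*E3^2 - 4*E1^2*E2^3*E4 - 4*E1^3*E3^3 + 18*E1^3*E2*E3*E4 - 27*E1^4*E4^2) = 0 := by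
        rcases mul_eq_zero.mp hbig with h | h
        · exact absurd h (pow_ne_zero _ hz4)
        · exact h
      have hPr : (256*E4^3 - 27*E3^4 + 144*E2*E3^2*E4 - 128*E2^2*E4^2 - 4*E2^3*E3^2 + 16*E2^4*E4 - 192*E1*E3*E4^2 + 18*E1*E2*E3^3 - 80*E1*E2^2*E3*E4 - 6*E1^2*E3^2*E4 + 144*E1^2*E2*E4^2 + E1^2*E2^2*E3^2 - 4*E1^2*E2^3*E4 - 4*E1^3*E3^3 + 18*E1^3*E2*E3*E4 - 27*E1^4*E4^2) =
          (r1-r2)^2*(r1-r3)^2*(r1-r4)^2*(r2-r3)^2*(r2-r4)^2*(r3-r4)^2 := by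
        rw [hE1, hE2, hE3, hE4]; ring
      have hprod : (r1-r2)^2*(r1-r3)^2*(r1-r4)^2*(r2-r3)^2*(r2-r4)^2*(r3-r4)^2 = 0 := by
        rw [← hPr]; exact hP0
      have hmv : quartic z = C (z 4) *
          ((X 0 - C r1 * X 1) * (X 0 - C r2 * X 1) * (X 0 - C r3 * X 1) * (X 0 - C r4 * X 1)) := by
        rw [quartic_eq_Cform, hb, hc, hd, he]
        simp only [map_mul, map_add, map_neg, map_ofNat]
        ring
      have hcase : r1 = r2 ∨ r1 = r3 ∨ r1 = r4 ∨ r2 = r3 ∨ r2 = r4 ∨ r3 = r4 := by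
        rcases mul_eq_zero.mp hprod with h | h
        · rcases mul_eq_zero.mp h with h | h
          · rcases mul_eq_zero.mp h with h | h
            · rcases mul_eq_zero.mp h with h | h
              · rcases mul_eq_zero.mp h with h | h
                · exact Or.inl (sq0 _ _ h)
                · exact Or.inr (Or.inl (sq0 _ _ h))
              · exact Or.inr (Or.inr (Or.inl (sq0 _ _ h)))
            · exact Or.inr (Or.inr (Or.inr (Or.inl (sq0 _ _ h))))
          · exact Or.inr (Or.inr (Or.inr (Or.inr (Or.inl (sq0 _ _ h)))))
        · exact Or.inr (Or.inr (Or.inr (Or.inr (Or.inr (sq0 _ _ h)))))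
      rcases hcase with h | h | h | h | h | h
      · exact ⟨r1, 1, Or.inr one_ne_zero,
          C (z 4) * ((X 0 - C r3 * X 1) * (X 0 - C r4 * X 1)),
          by rw [hmv, ← h]; simp only [map_one]; ring⟩
      · exact ⟨r1, 1, Or.inr one_ne_zero,
          C (z 4) * ((X 0 - C r2 * X 1) * (X 0 - C r4 * X 1)),
          by rw [hmv, ← h]; simp only [map_one]; ring⟩
      · exact ⟨r1, 1, Or.inr one_ne_zero,
          C (z 4) * ((X 0 - C r2 * X 1) * (X 0 - C r3 * X 1)),
          by rw [hmv, ← h]; simp only [map_one]; ring⟩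
      · exact ⟨r2, 1, Or.inr one_ne_zero,
          C (z 4) * ((X 0 - C r1 * X 1) * (X 0 - C r4 * X 1)),
          by rw [hmv, ← h]; simp only [map_one]; ring⟩
      · exact ⟨r2, 1, Or.inr one_ne_zero,
          C (z 4) * ((X 0 - C r1 * X 1) * (X 0 - C r3 * X 1)),
          by rw [hmv, ← h]; simp only [map_one]; ring⟩
      · exact ⟨r3, 1, Or.inr one_ne_zero,
          C (z 4) * ((X 0 - C r1 * X 1) * (X 0 - C r2 * X 1)),
          by rw [hmv, ← h]; simp only [map_one]; ring⟩
end
end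

section
/- Let f₁ = (Ys₁ - Xt₁)(Ys₂ - Xt₂) and f₂ = (Ys₁' - Xt₁')(Ys₂' - Xt₂') be binary quadratic forms over a field F with char(F) ≠ 2,3, with Res(f₁,f₂) ≠ 0, and let λ be the cross-ratio of the four points (s₁,t₁),(s₂,t₂),(s₁',t₁'),(s₂',t₂') of the projective line. Then I(f₁f₂) = (1/36)(λ + λ⁻¹ - 1)·Res(f₁,f₂), where Res is the homogeneous resultant and I is the apolar invariant of the quartic f₁f₂. -/
noncomputable section
open MvPolynomial

set_option maxHeartbeats 1000000 in
/-- for `f₁ = (Ys₁-Xt₁)(Ys₂-Xt₂)`, `f₂ = (Ys₁'-Xt₁')(Ys₂'-Xt₂')` with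
`Res(f₁,f₂) ≠ 0` and cross-ratio `λ` of the four roots,
`I(f₁f₂) = (1/36)(λ + λ⁻¹ - 1)·Res(f₁,f₂)`. -/
theorem stmt3 {F : Type*} [Field F] (h2 : (2 : F) ≠ 0) (h3 : (3 : F) ≠ 0)
    (s₁ t₁ s₂ t₂ s₁' t₁' s₂' t₂' : F) (z : Fin 5 → F)
    (Res lam : F)
    (hRes : Res = (t₁ * s₁' - s₁ * t₁') * (t₁ * s₂' - s₁ * t₂') * (t₂ * s₁' - s₂ * t₁')
      * (t₂ * s₂' - s₂ * t₂'))
    (hRes0 : Res ≠ 0)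
    (hlam : lam = ((t₁' * s₁ - t₁ * s₁') * (t₂' * s₂ - t₂ * s₂')) /
      ((t₁' * s₂ - t₂ * s₁') * (t₂' * s₁ - t₁ * s₂')))
    (hq : quartic z = ((C s₁ * X 1 - C t₁ * X 0) * (C s₂ * X 1 - C t₂ * X 0)) *
      ((C s₁' * X 1 - C t₁' * X 0) * (C s₂' * X 1 - C t₂' * X 0))) :
    apolarI z = (1 / 36) * (lam + lam⁻¹ - 1) * Res := by
  have h48 : (48 : F) ≠ 0 := by
    have : (48 : F) = 2 ^ 4 * 3 := by norm_num
    rw [this]; exact mul_ne_zero (pow_ne_zero 4 h2) h3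
  have h12 : (12 : F) ≠ 0 := by
    have : (12 : F) = 2 ^ 2 * 3 := by norm_num
    rw [this]; exact mul_ne_zero (pow_ne_zero 2 h2) h3
  -- evaluations
  have hz0 := congrArg (eval fun i : Fin 2 => if i = 0 then (0:F) else 1) hq
  have hz4 := congrArg (eval fun i : Fin 2 => if i = 0 then (1:F) else 0) hq
  have hA := congrArg (eval fun i : Fin 2 => if i = 0 then (1:F) else 1) hq
  have hB := congrArg (eval fun i : Fin 2 => if i = 0 then (-1:F) else 1) hq
  have hC := congrArg (eval fun i : Fin 2 => if i = 0 then (2:F) else 1) hq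
  have hD := congrArg (eval fun i : Fin 2 => if i = 0 then (-2:F) else 1) hq
  simp [quartic] at hz0 hz4 hA hB hC hD
  have hz1 : z 1 = (8 * ((s₁ + t₁) * (s₂ + t₂) * ((s₁' + t₁') * (s₂' + t₂'))
        - (s₁ - t₁) * (s₂ - t₂) * ((s₁' - t₁') * (s₂' - t₂')))
      + ((s₁ - 2*t₁) * (s₂ - 2*t₂) * ((s₁' - 2*t₁') * (s₂' - 2*t₂'))
        - (s₁ + 2*t₁) * (s₂ + 2*t₂) * ((s₁' + 2*t₁') * (s₂' + 2*t₂')))) / 48 := by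
    rw [eq_div_iff h48]; linear_combination 8*hB - 8*hA + hC - hD
  have hz3 : z 3 = (((s₁ + 2*t₁) * (s₂ + 2*t₂) * ((s₁' + 2*t₁') * (s₂' + 2*t₂'))
        - (s₁ - 2*t₁) * (s₂ - 2*t₂) * ((s₁' - 2*t₁') * (s₂' - 2*t₂')))
      - 2 * ((s₁ + t₁) * (s₂ + t₂) * ((s₁' + t₁') * (s₂' + t₂'))
        - (s₁ - t₁) * (s₂ - t₂) * ((s₁' - t₁') * (s₂' - t₂')))) / 48 := by
    rw [eq_div_iff h48]; linear_combination hD - hC - 2*hB + 2*hA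
  have hz2 : z 2 = ((s₁ - t₁) * (s₂ - t₂) * ((s₁' - t₁') * (s₂' - t₂'))
      + (s₁ + t₁) * (s₂ + t₂) * ((s₁' + t₁') * (s₂' + t₂'))
      - 2 * (s₁ * s₂ * (s₁' * s₂')) - 2 * (t₁ * t₂ * (t₁' * t₂'))) / 12 := by
    rw [eq_div_iff h12]; linear_combination hA + hB - 2*hz0 - 2*hz4
  -- nonzero factors
  rw [hRes] at hRes0
  have d1 : t₁ * s₁' - s₁ * t₁' ≠ 0 := fun h => hRes0 (by rw [h]; ring)
  have d2 : t₁ * s₂' - s₁ * t₂' ≠ 0 := fun h => hRes0 (by rw [h]; ring)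
  have d3 : t₂ * s₁' - s₂ * t₁' ≠ 0 := fun h => hRes0 (by rw [h]; ring)
  have d4 : t₂ * s₂' - s₂ * t₂' ≠ 0 := fun h => hRes0 (by rw [h]; ring)
  have e1 : t₁' * s₁ - t₁ * s₁' ≠ 0 := fun h => d1 (by linear_combination -h)
  have e4 : t₂' * s₂ - t₂ * s₂' ≠ 0 := fun h => d4 (by linear_combination -h)
  have e2 : t₁' * s₂ - t₂ * s₁' ≠ 0 := fun h => d3 (by linear_combination -h)
  have e3 : t₂' * s₁ - t₁ * s₂' ≠ 0 := fun h => d2 (by linear_combination -h)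
  have hnum : (t₁' * s₁ - t₁ * s₁') * (t₂' * s₂ - t₂ * s₂') ≠ 0 := mul_ne_zero e1 e4
  have hden : (t₁' * s₂ - t₂ * s₁') * (t₂' * s₁ - t₁ * s₂') ≠ 0 := mul_ne_zero e2 e3
  have h36 : (36 : F) ≠ 0 := by
    have : (36 : F) = 2 ^ 2 * 3 ^ 2 := by norm_num
    rw [this]; exact mul_ne_zero (pow_ne_zero 2 h2) (pow_ne_zero 2 h3)
  have aux : ∀ a b : F, a ≠ 0 → b ≠ 0 →
      a / b + (a / b)⁻¹ - 1 = (a * a + b * b - a * b) / (a * b) := by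
    intro a b ha hb
    rw [inv_div]
    field_simp
  have hResn : Res = ((t₁' * s₁ - t₁ * s₁') * (t₂' * s₂ - t₂ * s₂')) *
      ((t₁' * s₂ - t₂ * s₁') * (t₂' * s₁ - t₁ * s₂')) := by rw [hRes]; ring
  rw [hlam, aux _ _ hnum hden, hResn, mul_assoc,
    div_mul_cancel₀ _ (mul_ne_zero hnum hden)]
  rw [apolarI, hz0, hz1, hz2, hz3, hz4]
  field_simp
  ring
end
end

section
/- Let q be a prime power with gcd(q,6)=1 and let μ ∈ {±1} with q ≡ μ (mod 3). For c ∈ F_q ∖ {0, -256/27}, consider the cubic Z³ - 4Z² = c over F_q. The number of such c for which the cubic has exactly 3 roots in F_q is (q-6-μ)/6, the number with exactly 1 root is (q-2+μ)/2, and the number with no roots is (q-μ)/3. -/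
set_option linter.unusedSectionVars false
set_option linter.unusedVariables false
set_option maxHeartbeats 1000000

open Finset

section Stmt10Aux
variable {F : Type*} [Field F] [Fintype F] [DecidableEq F]

def fib (c : F) : Finset F := Finset.univ.filter (fun x => x^3 - 4*x^2 = c)

lemma mem_fib {c x : F} : x ∈ fib c ↔ x^3 - 4*x^2 = c := by simp [fib]

lemma zne (h3 : (3:F) ≠ 0) {c x y : F} (hc0 : c ≠ 0) (hcb : c ≠ -256/27)
    (hx : x^3 - 4*x^2 = c) (hg : x^2 + x*y + y^2 - 4*x - 4*y = 0) :
    4 - x - y ≠ x := by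
  have h27 : (27:F) ≠ 0 := by
    intro h; exact h3 (pow_eq_zero_iff (n := 3) (by norm_num) |>.1 (by linear_combination h))
  intro heq
  have hkey : x * (3*x - 8) = 0 := by linear_combination hg + (y - x) * heq
  rcases mul_eq_zero.1 hkey with h | h
  · exact hc0 (by linear_combination -hx + (x^2 - 4*x) * h)
  · have hx8 : x = 8/3 := by field_simp; linear_combination h
    exact hcb (by rw [← hx, hx8]; field_simp; ring)

lemma card_fib_of_two (h2 : (2:F) ≠ 0) (h3 : (3:F) ≠ 0) {c x y : F}
    (hc0 : c ≠ 0) (hcb : c ≠ -256/27)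
    (hx : x^3 - 4*x^2 = c) (hy : y^3 - 4*y^2 = c) (hxy : x ≠ y) :
    (fib c).card = 3 := by
  have hg : x^2 + x*y + y^2 - 4*x - 4*y = 0 := by
    have h' : (x - y) * (x^2 + x*y + y^2 - 4*x - 4*y) = 0 := by linear_combination hx - hy
    rcases mul_eq_zero.1 h' with h | h
    · exact absurd (by linear_combination h) hxy
    · exact h
  have hg' : y^2 + y*x + x^2 - 4*y - 4*x = 0 := by linear_combination hg
  have hz : (4 - x - y)^3 - 4*(4 - x - y)^2 = c := by
    linear_combination hx + (4 - 2*x - y) * hg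
  have hzx : 4 - x - y ≠ x := zne h3 hc0 hcb hx hg
  have hzy : 4 - x - y ≠ y := by
    intro heq
    exact zne h3 hc0 hcb hy hg' (by linear_combination heq)
  have hsub : fib c = {x, y, 4 - x - y} := by
    ext w
    simp only [mem_fib, Finset.mem_insert, Finset.mem_singleton]
    constructor
    · intro hw
      have h' : (w - x) * ((w - y) * (w - (4 - x - y))) = 0 := by
        linear_combination hw - hx + (x - w) * hg
      rcases mul_eq_zero.1 h' with h | h
      · exact Or.inl (by linear_combination h)
      · rcases mul_eq_zero.1 h with h | h
        · exact Or.inr (Or.inl (by linear_combination h))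
        · exact Or.inr (Or.inr (by linear_combination h))
    · rintro (rfl | rfl | rfl)
      exacts [hx, hy, hz]
  rw [hsub, Finset.card_insert_of_notMem, Finset.card_insert_of_notMem,
    Finset.card_singleton]
  · simp only [Finset.mem_singleton]
    exact fun h => hzy h.symm
  · simp only [Finset.mem_insert, Finset.mem_singleton]
    rintro (h | h)
    exacts [hxy h, hzx h.symm]

lemma card_fib (h2 : (2:F) ≠ 0) (h3 : (3:F) ≠ 0) {c : F} (hc0 : c ≠ 0) (hcb : c ≠ -256/27) :
    (fib c).card = 0 ∨ (fib c).card = 1 ∨ (fib c).card = 3 := by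
  by_cases hle : (fib c).card ≤ 1
  · rcases Nat.le_one_iff_eq_zero_or_eq_one.1 hle with h | h
    exacts [Or.inl h, Or.inr (Or.inl h)]
  · push_neg at hle
    obtain ⟨x, hx, y, hy, hxy⟩ := Finset.one_lt_card.1 hle
    exact Or.inr (Or.inr (card_fib_of_two h2 h3 hc0 hcb (mem_fib.1 hx) (mem_fib.1 hy) hxy))

lemma ringchar_ne_two (h2 : (2:F) ≠ 0) : ringChar F ≠ 2 := by
  intro hc
  apply h2
  have := ringChar.Nat.cast_ringChar (R := F)
  rw [hc] at this
  exact_mod_cast this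

lemma fiberwise_sq (a : F → F) :
    (Finset.univ.filter (fun p : F × F => p.1^2 = a p.2)).card
      = ∑ w : F, (Finset.univ.filter (fun v : F => v^2 = a w)).card := by
  rw [Finset.card_eq_sum_card_fiberwise (f := Prod.snd) (t := Finset.univ) (fun x _ => mem_univ _)]
  refine Finset.sum_congr rfl (fun w _ => ?_)
  refine Finset.card_nbij' (fun p => p.1) (fun v => (v, w)) ?_ ?_ ?_ ?_ <;>
    simp +contextual [Prod.ext_iff, eq_comm, Set.MapsTo, Set.LeftInvOn, Set.RightInvOn, Set.EqOn]

lemma card_sq_eq (h2 : (2:F) ≠ 0) (a : F) :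
    ((Finset.univ.filter (fun v : F => v^2 = a)).card : ℤ) = quadraticChar F a + 1 := by
  have := quadraticChar_card_sqrts (ringchar_ne_two h2) a
  rw [← this, Set.toFinset_setOf]

lemma sum_char (h2 : (2:F) ≠ 0) {e : F} (he : e ≠ 0) :
    ∑ w : F, quadraticChar F (w^2 + e) = -1 := by
  have hM : (Finset.univ.filter (fun p : F × F => p.1^2 = p.2^2 + e)).card
      = (Finset.univ.filter (fun a : F => a ≠ 0)).card := by
    refine Finset.card_nbij' (fun p => p.1 - p.2)
      (fun a => ((a + e/a)/2, (e/a - a)/2)) ?_ ?_ ?_ ?_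
    · intro p hp
      simp only [Finset.mem_coe, Finset.mem_filter, Finset.mem_univ, true_and] at hp ⊢
      intro h
      apply he
      linear_combination (p.1 + p.2) * h - hp
    · intro a ha
      simp only [Finset.mem_coe, Finset.mem_filter, Finset.mem_univ, true_and] at ha ⊢
      field_simp
      ring
    · intro p hp
      simp only [Finset.mem_coe, Finset.mem_filter, Finset.mem_univ, true_and] at hp
      have hne : p.1 - p.2 ≠ 0 := by
        intro h
        exact he (by linear_combination (p.1 + p.2) * h - hp)
      have : e / (p.1 - p.2) = p.1 + p.2 := by
        rw [div_eq_iff hne]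
        linear_combination -hp
      ext
      · simp only [this]; field_simp; ring
      · simp only [this]; field_simp; ring
    · intro a ha
      simp only [Finset.mem_coe, Finset.mem_filter, Finset.mem_univ, true_and] at ha
      field_simp
      ring
  have hcard : (Finset.univ.filter (fun a : F => a ≠ 0)).card = Fintype.card F - 1 := by
    rw [Finset.filter_ne' Finset.univ 0, Finset.card_erase_of_mem (mem_univ _), Finset.card_univ]
  have hsum := fiberwise_sq (F := F) (fun w => w^2 + e)
  have hq : 1 ≤ Fintype.card F := Fintype.card_pos
  have hZ : ((Finset.univ.filter (fun p : F × F => p.1^2 = p.2^2 + e)).card : ℤ)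
      = (Fintype.card F : ℤ) - 1 := by
    rw [hM, hcard]; push_cast [hq]; ring
  rw [hsum] at hZ
  push_cast at hZ
  have : (∑ w : F, ((Finset.univ.filter (fun v : F => v^2 = w^2 + e)).card : ℤ))
      = ∑ w : F, (quadraticChar F (w^2 + e) + 1) := by
    exact Finset.sum_congr rfl (fun w _ => card_sq_eq h2 _)
  rw [this] at hZ
  rw [Finset.sum_add_distrib, Finset.sum_const, Finset.card_univ, nsmul_eq_mul, mul_one] at hZ
  omega

lemma nine_ne (h3 : (3:F) ≠ 0) : (9:F) ≠ 0 := by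
  intro h; exact h3 (pow_eq_zero_iff (n := 2) (by norm_num) |>.1 (by linear_combination h))

lemma conicN_card (h2 : (2:F) ≠ 0) (h3 : (3:F) ≠ 0) :
    ((Finset.univ.filter (fun p : F × F => p.1^2 = 64 - 3*p.2^2)).card : ℤ)
      = (Fintype.card F : ℤ) - quadraticChar F (-3) := by
  have he : (-64/3 : F) ≠ 0 := by
    rw [div_ne_zero_iff]
    refine ⟨?_, h3⟩
    intro h
    exact h2 (pow_eq_zero_iff (n := 6) (by norm_num) |>.1 (by linear_combination -h))
  rw [fiberwise_sq (fun w => 64 - 3*w^2)]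
  push_cast
  rw [Finset.sum_congr rfl (fun w _ => card_sq_eq h2 ((64:F) - 3*w^2))]
  rw [Finset.sum_add_distrib, Finset.sum_const, Finset.card_univ, nsmul_eq_mul, mul_one]
  have key : (∑ w : F, (quadraticChar F) (64 - 3*w^2))
      = quadraticChar F (-3) * ∑ w : F, quadraticChar F (w^2 + (-64/3)) := by
    rw [Finset.mul_sum]
    refine Finset.sum_congr rfl (fun w _ => ?_)
    rw [← map_mul]
    congr 1
    field_simp
    ring
  rw [key, sum_char h2 he]
  ring

lemma char_neg3 (h2 : (2:F) ≠ 0) (h3 : (3:F) ≠ 0) (μ : ℤ) (hμ : μ = 1 ∨ μ = -1)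
    (hmod : (Fintype.card F : ℤ) ≡ μ [ZMOD 3]) :
    (quadraticChar F (-3) : ℤ) = μ := by
  have hn3 : (-3 : F) ≠ 0 := neg_ne_zero.mpr h3
  have hcard : Fintype.card Fˣ = Fintype.card F - 1 := Fintype.card_units (α := F)
  have hq1 : 1 ≤ Fintype.card F := Fintype.card_pos
  rcases hμ with rfl | rfl
  · -- q ≡ 1 mod 3: -3 is a square
    have hdvd : 3 ∣ Fintype.card F - 1 := by
      have : ((Fintype.card F : ℤ)) % 3 = 1 % 3 := hmod
      have h31 : (3:ℤ) ∣ (Fintype.card F : ℤ) - 1 := by omega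
      have : (3:ℤ) ∣ ((Fintype.card F - 1 : ℕ) : ℤ) := by push_cast [hq1]; omega
      exact_mod_cast this
    rw [← hcard] at hdvd
    obtain ⟨g, hg⟩ := IsCyclic.exists_generator (α := Fˣ)
    have hord : orderOf g = Fintype.card Fˣ := by rw [orderOf_eq_card_of_forall_mem_zpowers hg, Nat.card_eq_fintype_card]
    set n := Fintype.card Fˣ with hn
    have hnpos : 0 < n := Fintype.card_pos
    have hω3 : (g ^ (n / 3)) ^ 3 = 1 := by
      rw [← pow_mul, Nat.div_mul_cancel hdvd, ← hord, pow_orderOf_eq_one]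
    have hω1 : g ^ (n / 3) ≠ 1 := by
      intro h
      have := orderOf_dvd_of_pow_eq_one h
      rw [hord] at this
      have hlt : n / 3 < n := Nat.div_lt_self hnpos (by norm_num)
      have hpos : 0 < n / 3 := Nat.div_pos (Nat.le_of_dvd hnpos hdvd) (by norm_num)
      exact absurd (Nat.le_of_dvd hpos this) (by omega)
    set w : F := ((g ^ (n / 3) : Fˣ) : F) with hw
    have hw3 : w ^ 3 = 1 := by
      rw [hw, ← Units.val_pow_eq_pow_val, hω3, Units.val_one]
    have hwne : w ≠ 1 := by
      intro h
      exact hω1 (Units.ext (by rw [← hw, h, Units.val_one]))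
    have hsum : w^2 + w + 1 = 0 := by
      have h' : (w - 1) * (w^2 + w + 1) = 0 := by linear_combination hw3
      rcases mul_eq_zero.1 h' with h | h
      · exact absurd (by linear_combination h) hwne
      · exact h
    have hsq : IsSquare (-3 : F) := ⟨2*w + 1, by linear_combination -4*hsum⟩
    rw [(quadraticChar_one_iff_isSquare hn3).mpr hsq]
  · -- q ≡ -1 mod 3: -3 is not a square
    have hq3 : (Fintype.card F : ℤ) % 3 = 2 := by
      have : ((Fintype.card F : ℤ)) % 3 = (-1) % 3 := hmod
      omega
    have hnsq : ¬ IsSquare (-3 : F) := by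
      rintro ⟨r, hr⟩
      have hw0 : (r - 1)/2 ≠ 0 ∨ True := Or.inr trivial
      set w : F := (r - 1)/2 with hwdef
      have hsum : w^2 + w + 1 = 0 := by
        rw [hwdef]
        field_simp
        linear_combination -hr
      have hwne0 : w ≠ 0 := by
        intro h
        rw [h] at hsum
        simp at hsum
      have hw3 : w ^ 3 = 1 := by linear_combination (w - 1) * hsum
      have hwne1 : w ≠ 1 := by
        intro h
        rw [h] at hsum
        apply h3
        linear_combination hsum
      set ω : Fˣ := Units.mk0 w hwne0 with hωdef
      have hω3 : ω ^ 3 = 1 := by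
        ext
        rw [Units.val_pow_eq_pow_val, Units.val_one]
        exact hw3
      have hordω : orderOf ω = 3 := by
        have hdvd3 : orderOf ω ∣ 3 := orderOf_dvd_of_pow_eq_one hω3
        have hne1 : orderOf ω ≠ 1 := by
          intro h
          rw [orderOf_eq_one_iff] at h
          apply hwne1
          rw [hωdef] at h
          have := congrArg (Units.val) h
          simpa using this
        rcases (Nat.prime_three.eq_one_or_self_of_dvd _ hdvd3) with h | h
        · exact absurd h hne1
        · exact h
      have hdvdcard : (3:ℕ) ∣ Fintype.card Fˣ := hordω ▸ orderOf_dvd_card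
      rw [hcard] at hdvdcard
      obtain ⟨k, hk⟩ := hdvdcard
      omega
    rw [quadraticChar_neg_one_iff_not_isSquare.mpr hnsq]

def PP (F : Type*) [Field F] [Fintype F] [DecidableEq F] : Finset (F × F) :=
  Finset.univ.filter (fun p : F × F => p.1^3 - 4*p.1^2 = p.2^3 - 4*p.2^2 ∧ p.1 ≠ p.2)

def CC (F : Type*) [Field F] [Fintype F] [DecidableEq F] : Finset (F × F) :=
  Finset.univ.filter (fun p : F × F => p.1^2 + p.1*p.2 + p.2^2 - 4*p.1 - 4*p.2 = 0)

lemma six_ne (h2 : (2:F) ≠ 0) (h3 : (3:F) ≠ 0) : (6:F) ≠ 0 := by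
  intro h
  rcases mul_eq_zero.1 (show (2:F) * 3 = 0 by linear_combination h) with h' | h'
  exacts [h2 h', h3 h']

lemma C_to_N (h2 : (2:F) ≠ 0) (h3 : (3:F) ≠ 0) :
    (CC F).card = (Finset.univ.filter (fun p : F × F => p.1^2 = 64 - 3*p.2^2)).card := by
  have h6 : (6:F) ≠ 0 := six_ne h2 h3
  have h36 : (36:F) ≠ 0 := by
    intro h
    rcases mul_eq_zero.1 (show (6:F) * 6 = 0 by linear_combination h) with h' | h' <;>
      exact h6 h'
  refine Finset.card_nbij' (fun p => (3*(p.1 + p.2) - 8, p.1 - p.2))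
    (fun p => ((p.1 + 8 + 3*p.2)/6, (p.1 + 8 - 3*p.2)/6)) ?_ ?_ ?_ ?_
  · intro p hp
    simp only [CC, Finset.mem_coe, Finset.mem_filter, Finset.mem_univ, true_and] at hp ⊢
    linear_combination 12 * hp
  · intro p hp
    simp only [CC, Finset.mem_coe, Finset.mem_filter, Finset.mem_univ, true_and] at hp ⊢
    have ha : (p.1 + 8 + 3*p.2)/6 * 6 = p.1 + 8 + 3*p.2 := div_mul_cancel₀ _ h6
    have hb : (p.1 + 8 - 3*p.2)/6 * 6 = p.1 + 8 - 3*p.2 := div_mul_cancel₀ _ h6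
    refine mul_left_cancel₀ h36 ?_
    linear_combination (6*((p.1 + 8 + 3*p.2)/6) + 6*((p.1 + 8 - 3*p.2)/6) + (p.1+8+3*p.2) - 24) * ha
      + (6*((p.1 + 8 - 3*p.2)/6) + (p.1+8+3*p.2) + (p.1+8-3*p.2) - 24) * hb + 3 * hp
  · intro p hp
    ext
    · show (3*(p.1 + p.2) - 8 + 8 + 3*(p.1 - p.2))/6 = p.1
      rw [div_eq_iff h6]; ring
    · show (3*(p.1 + p.2) - 8 + 8 - 3*(p.1 - p.2))/6 = p.2
      rw [div_eq_iff h6]; ring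
  · intro p hp
    have ha : (p.1 + 8 + 3*p.2)/6 * 6 = p.1 + 8 + 3*p.2 := div_mul_cancel₀ _ h6
    have hb : (p.1 + 8 - 3*p.2)/6 * 6 = p.1 + 8 - 3*p.2 := div_mul_cancel₀ _ h6
    ext
    · show 3*((p.1 + 8 + 3*p.2)/6 + (p.1 + 8 - 3*p.2)/6) - 8 = p.1
      refine mul_left_cancel₀ h2 ?_
      linear_combination ha + hb
    · show (p.1 + 8 + 3*p.2)/6 - (p.1 + 8 - 3*p.2)/6 = p.2
      refine mul_left_cancel₀ h6 ?_
      linear_combination ha - hb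

lemma C_split (h2 : (2:F) ≠ 0) (h3 : (3:F) ≠ 0) : (CC F).card = (PP F).card + 2 := by
  have ht : (8/3 : F) * 3 = 8 := div_mul_cancel₀ 8 h3
  have hdiag : (CC F).filter (fun p : F × F => p.1 = p.2) = {((0:F),(0:F)), (8/3, 8/3)} := by
    ext p
    simp only [CC, Finset.filter_filter, Finset.mem_filter, Finset.mem_univ, true_and,
      Finset.mem_insert, Finset.mem_singleton, Prod.ext_iff]
    constructor
    · rintro ⟨hg, heq⟩
      have h' : p.1 * (3 * p.1 - 8) = 0 := by
        linear_combination hg + (2*p.1 + p.2 - 4) * heq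
      rcases mul_eq_zero.1 h' with h | h
      · exact Or.inl ⟨h, heq ▸ h⟩
      · have hp8 : p.1 = 8/3 := by field_simp; linear_combination h
        exact Or.inr ⟨hp8, heq ▸ hp8⟩
    · rintro (⟨ha, hb⟩ | ⟨ha, hb⟩) <;> rw [ha, hb]
      · exact ⟨by ring, rfl⟩
      · exact ⟨by linear_combination (8/3 : F) * ht, rfl⟩
  have hoff : (CC F).filter (fun p : F × F => ¬ p.1 = p.2) = PP F := by
    ext p
    simp only [CC, PP, Finset.filter_filter, Finset.mem_filter, Finset.mem_univ, true_and]
    constructor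
    · rintro ⟨hg, hne⟩
      exact ⟨by linear_combination (p.1 - p.2) * hg, hne⟩
    · rintro ⟨heq, hne⟩
      refine ⟨?_, hne⟩
      have h' : (p.1 - p.2) * (p.1^2 + p.1*p.2 + p.2^2 - 4*p.1 - 4*p.2) = 0 := by
        linear_combination heq
      rcases mul_eq_zero.1 h' with h | h
      · exact absurd (by linear_combination h) hne
      · exact h
  have key := Finset.card_filter_add_card_filter_not
    (s := CC F) (p := fun p : F × F => p.1 = p.2)
  rw [hdiag, hoff] at key
  have hne : ((0:F),(0:F)) ≠ ((8/3 : F), (8/3 : F)) := by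
    intro h
    have h1 : (0:F) = 8/3 := congrArg Prod.fst h
    have h8 : (8:F) = 0 := by rw [← ht, ← h1, zero_mul]
    exact h2 (pow_eq_zero_iff (n := 3) (by norm_num) |>.1 (by linear_combination h8))
  rw [Finset.card_pair hne] at key
  omega

lemma P_fiberwise : (PP F).card = ∑ c : F, ((fib c).offDiag).card := by
  rw [Finset.card_eq_sum_card_fiberwise (f := fun p : F × F => p.1^3 - 4*p.1^2)
    (t := Finset.univ) (fun x _ => mem_univ _)]
  refine Finset.sum_congr rfl (fun c _ => ?_)
  have : (PP F).filter (fun p : F × F => p.1^3 - 4*p.1^2 = c) = (fib c).offDiag := by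
    ext p
    simp only [PP, Finset.filter_filter, Finset.mem_filter, Finset.mem_univ, true_and,
      Finset.mem_offDiag, mem_fib]
    constructor
    · rintro ⟨⟨heq, hne⟩, hc⟩
      exact ⟨hc, heq ▸ hc, hne⟩
    · rintro ⟨h1, h2, hne⟩
      exact ⟨⟨h1.trans h2.symm, hne⟩, h1⟩
  rw [this]


lemma card_fib_zero (h2 : (2:F) ≠ 0) : (fib (0:F)).card = 2 := by
  have : fib (0:F) = {0, 4} := by
    ext x
    simp only [mem_fib, Finset.mem_insert, Finset.mem_singleton]
    constructor
    · intro h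
      have h' : x^2 * (x - 4) = 0 := by linear_combination h
      rcases mul_eq_zero.1 h' with h'' | h''
      · exact Or.inl (pow_eq_zero_iff (by norm_num) |>.1 h'')
      · exact Or.inr (by linear_combination h'')
    · rintro (rfl | rfl) <;> ring
  rw [this, Finset.card_insert_of_notMem, Finset.card_singleton]
  simp only [Finset.mem_singleton]
  intro h
  exact h2 (mul_self_eq_zero.mp (by linear_combination h.symm))

lemma card_fib_bad (h2 : (2:F) ≠ 0) (h3 : (3:F) ≠ 0) : (fib (-256/27 : F)).card = 2 := by
  have h27 : (27:F) ≠ 0 := by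
    intro h; exact h3 (pow_eq_zero_iff (n := 3) (by norm_num) |>.1 (by linear_combination h))
  have hfib : fib (-256/27 : F) = {-4/3, 8/3} := by
    ext x
    simp only [mem_fib, Finset.mem_insert, Finset.mem_singleton]
    constructor
    · intro h
      have h27' : 27 * (x^3 - 4*x^2) = -256 := by rw [h]; field_simp
      have h' : (3*x + 4) * (3*x - 8)^2 = 0 := by linear_combination h27'
      rcases mul_eq_zero.1 h' with h'' | h''
      · exact Or.inl (by field_simp; linear_combination h'')
      · have := pow_eq_zero_iff (n := 2) (by norm_num) |>.1 h''
        exact Or.inr (by field_simp; linear_combination this)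
    · rintro (rfl | rfl) <;> · field_simp; ring
  rw [hfib, Finset.card_insert_of_notMem, Finset.card_singleton]
  simp only [Finset.mem_singleton]
  intro h
  have h' : (-4/3 : F) * 3 = (8/3) * 3 := by rw [h]
  rw [div_mul_cancel₀ _ h3, div_mul_cancel₀ _ h3] at h'
  have h12 : (12:F) = 0 := by linear_combination -h'
  rcases mul_eq_zero.1 (show (2:F) * 6 = 0 by linear_combination h12) with hh | hh
  · exact h2 hh
  · rcases mul_eq_zero.1 (show (2:F) * 3 = 0 by linear_combination hh) with hh' | hh'
    exacts [h2 hh', h3 hh']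

lemma bad_ne_zero (h2 : (2:F) ≠ 0) (h3 : (3:F) ≠ 0) : (-256/27 : F) ≠ 0 := by
  have h27 : (27:F) ≠ 0 := by
    intro h; exact h3 (pow_eq_zero_iff (n := 3) (by norm_num) |>.1 (by linear_combination h))
  intro h
  rw [div_eq_zero_iff] at h
  rcases h with h | h
  · exact h2 (pow_eq_zero_iff (n := 8) (by norm_num) |>.1 (by linear_combination -h))
  · exact h27 h

end Stmt10Aux

noncomputable section

/-- for `q` coprime to 6 and `μ = ±1` with `q ≡ μ (mod 3)`, among
`c ∈ F_q ∖ {0, -256/27}` the cubic `Z³ - 4Z² = c` has exactly 3 roots for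
`(q-6-μ)/6` values of `c`, exactly 1 root for `(q-2+μ)/2` values, and
no roots for `(q-μ)/3` values. -/
theorem stmt10 {F : Type*} [Field F] [Fintype F] (h2 : (2 : F) ≠ 0) (h3 : (3 : F) ≠ 0)
    (μ : ℤ) (hμ : μ = 1 ∨ μ = -1) (hmod : (Fintype.card F : ℤ) ≡ μ [ZMOD 3]) :
    (6 : ℤ) * ({c : F | c ≠ 0 ∧ c ≠ -256 / 27 ∧
        ({x : F | x ^ 3 - 4 * x ^ 2 = c}).ncard = 3}).ncard
      = (Fintype.card F : ℤ) - 6 - μ ∧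
    (2 : ℤ) * ({c : F | c ≠ 0 ∧ c ≠ -256 / 27 ∧
        ({x : F | x ^ 3 - 4 * x ^ 2 = c}).ncard = 1}).ncard
      = (Fintype.card F : ℤ) - 2 + μ ∧
    (3 : ℤ) * ({c : F | c ≠ 0 ∧ c ≠ -256 / 27 ∧
        ({x : F | x ^ 3 - 4 * x ^ 2 = c}) = ∅}).ncard
      = (Fintype.card F : ℤ) - μ := by
  letI : DecidableEq F := Classical.decEq F
  have hbad0 : (-256/27 : F) ≠ 0 := bad_ne_zero h2 h3
  -- the base set and the three classes as finsets
  set B : Finset F := Finset.univ.filter (fun c : F => c ≠ 0 ∧ c ≠ -256/27) with hB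
  set A3 : Finset F := B.filter (fun c => (fib c).card = 3) with hA3
  set A1 : Finset F := B.filter (fun c => (fib c).card = 1) with hA1
  set A0 : Finset F := B.filter (fun c => (fib c).card = 0) with hA0
  -- identify the statement's sets
  have hsetfib : ∀ c : F, {x : F | x ^ 3 - 4 * x ^ 2 = c} = ↑(fib c) := by
    intro c; ext x; simp [fib]
  have hS3 : {c : F | c ≠ 0 ∧ c ≠ -256 / 27 ∧
      ({x : F | x ^ 3 - 4 * x ^ 2 = c}).ncard = 3} = ↑A3 := by
    ext c
    simp only [Set.mem_setOf_eq, hA3, hB, Finset.coe_filter, Finset.mem_filter,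
      Finset.mem_univ, true_and, Set.mem_setOf_eq, hsetfib c, Set.ncard_coe_finset]
    tauto
  have hS1 : {c : F | c ≠ 0 ∧ c ≠ -256 / 27 ∧
      ({x : F | x ^ 3 - 4 * x ^ 2 = c}).ncard = 1} = ↑A1 := by
    ext c
    simp only [Set.mem_setOf_eq, hA1, hB, Finset.coe_filter, Finset.mem_filter,
      Finset.mem_univ, true_and, Set.mem_setOf_eq, hsetfib c, Set.ncard_coe_finset]
    tauto
  have hS0 : {c : F | c ≠ 0 ∧ c ≠ -256 / 27 ∧
      ({x : F | x ^ 3 - 4 * x ^ 2 = c}) = ∅} = ↑A0 := by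
    ext c
    simp only [Set.mem_setOf_eq, hA0, hB, Finset.coe_filter, Finset.mem_filter,
      Finset.mem_univ, true_and, Set.mem_setOf_eq, hsetfib c, Finset.card_eq_zero,
      ← Finset.coe_eq_empty]
    tauto
  rw [hS3, hS1, hS0, Set.ncard_coe_finset, Set.ncard_coe_finset, Set.ncard_coe_finset]
  -- trichotomy on B
  have tri : ∀ c ∈ B, (fib c).card = 0 ∨ (fib c).card = 1 ∨ (fib c).card = 3 := by
    intro c hc
    rw [hB, Finset.mem_filter] at hc
    exact card_fib h2 h3 hc.2.1 hc.2.2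
  -- complement of B is the two-element set
  have hBc : Finset.univ.filter (fun c : F => ¬(c ≠ 0 ∧ c ≠ -256/27))
      = {(0:F), -256/27} := by
    ext c
    simp only [Finset.mem_filter, Finset.mem_univ, true_and, Finset.mem_insert,
      Finset.mem_singleton]
    tauto
  have h0bad : (0:F) ∉ ({-256/27} : Finset F) := by
    simp only [Finset.mem_singleton]
    exact fun h => hbad0 h.symm
  -- cardinality of B
  have hBcard : B.card + 2 = Fintype.card F := by
    have := Finset.card_filter_add_card_filter_not
      (s := (Finset.univ : Finset F)) (p := fun c : F => c ≠ 0 ∧ c ≠ -256/27)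
    rw [hBc] at this
    rw [← hB] at this
    rwa [Finset.card_insert_of_notMem h0bad, Finset.card_singleton, Finset.card_univ] at this
  -- B.card splits into the three classes
  have hBsplit : B.card = A0.card + A1.card + A3.card := by
    have : ∀ c ∈ B, (1:ℕ) = (if (fib c).card = 0 then 1 else 0)
        + (if (fib c).card = 1 then 1 else 0) + (if (fib c).card = 3 then 1 else 0) := by
      intro c hc
      rcases tri c hc with h | h | h <;> simp [h]
    calc B.card = ∑ c ∈ B, 1 := by rw [Finset.sum_const, smul_eq_mul, mul_one]
      _ = ∑ c ∈ B, ((if (fib c).card = 0 then 1 else 0)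
          + (if (fib c).card = 1 then 1 else 0) + (if (fib c).card = 3 then 1 else 0)) :=
        Finset.sum_congr rfl this
      _ = A0.card + A1.card + A3.card := by
        rw [Finset.sum_add_distrib, Finset.sum_add_distrib, hA0, hA1, hA3]
        simp [Finset.sum_boole]
  -- total fiber count
  have htotal : ∑ c : F, (fib c).card = Fintype.card F := by
    rw [← Finset.card_univ (α := F)]
    exact (Finset.card_eq_sum_card_fiberwise
      (f := fun x : F => x^3 - 4*x^2) (t := Finset.univ) (fun x _ => mem_univ _)).symm
  -- split the total sum
  have hsum_split : ∀ (g : F → ℕ), (∑ c : F, g c) = (∑ c ∈ B, g c) + (g 0 + g (-256/27)) := by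
    intro g
    have := Finset.sum_filter_add_sum_filter_not Finset.univ
      (fun c : F => c ≠ 0 ∧ c ≠ -256/27) g
    rw [hBc, ← hB] at this
    rw [← this]
    congr 1
    rw [Finset.sum_insert h0bad, Finset.sum_singleton]
  have hsumB : ∑ c ∈ B, (fib c).card = 3 * A3.card + A1.card := by
    have : ∀ c ∈ B, (fib c).card = 3 * (if (fib c).card = 3 then 1 else 0)
        + (if (fib c).card = 1 then 1 else 0) := by
      intro c hc
      rcases tri c hc with h | h | h <;> simp [h]
    calc ∑ c ∈ B, (fib c).card = ∑ c ∈ B, (3 * (if (fib c).card = 3 then 1 else 0)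
        + (if (fib c).card = 1 then 1 else 0)) := Finset.sum_congr rfl this
      _ = 3 * A3.card + A1.card := by
        rw [Finset.sum_add_distrib, ← Finset.mul_sum, hA3, hA1]
        simp [Finset.sum_boole]
  have hE1 : 3 * A3.card + A1.card + 4 = Fintype.card F := by
    have := hsum_split (fun c => (fib c).card)
    rw [htotal, hsumB, card_fib_zero h2, card_fib_bad h2 h3] at this
    omega
  -- pair counts
  have hsumoff : ∑ c ∈ B, ((fib c).offDiag).card = 6 * A3.card := by
    have : ∀ c ∈ B, ((fib c).offDiag).card = 6 * (if (fib c).card = 3 then 1 else 0) := by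
      intro c hc
      rcases tri c hc with h | h | h <;> simp [Finset.offDiag_card, h]
    calc ∑ c ∈ B, ((fib c).offDiag).card
        = ∑ c ∈ B, 6 * (if (fib c).card = 3 then 1 else 0) := Finset.sum_congr rfl this
      _ = 6 * A3.card := by
        rw [← Finset.mul_sum, hA3]
        simp [Finset.sum_boole]
  have hPtot : (PP F).card = 6 * A3.card + 4 := by
    rw [P_fiberwise, hsum_split (fun c => ((fib c).offDiag).card), hsumoff]
    rw [Finset.offDiag_card, Finset.offDiag_card, card_fib_zero h2, card_fib_bad h2 h3]
  have hCP : (CC F).card = (PP F).card + 2 := C_split h2 h3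
  have hCcount : ((CC F).card : ℤ) = (Fintype.card F : ℤ) - μ := by
    rw [C_to_N h2 h3, conicN_card h2 h3, char_neg3 h2 h3 μ hμ hmod]
  have hE2 : 6 * (A3.card : ℤ) = (Fintype.card F : ℤ) - μ - 6 := by
    rw [hCP, hPtot] at hCcount
    push_cast at hCcount
    linarith
  -- final arithmetic
  have hq : (2:ℤ) + (A0.card + A1.card + A3.card : ℕ) = (Fintype.card F : ℤ) := by
    rw [← hBsplit]
    exact_mod_cast by omega
  push_cast at hq
  have hE1' : 3 * (A3.card : ℤ) + A1.card + 4 = (Fintype.card F : ℤ) := by exact_mod_cast hE1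
  refine ⟨by linarith, by linarith, by linarith⟩

end
end

section
/- Let q be a prime power with gcd(q,6)=1. Every binary quartic form f over F_q with nonzero discriminant and having at least one linear factor over F_q is GL₂(F_q)-equivalent (up to scalar) to X·R_f(X,Y), where R_f(X,Y) = -4Y³ + 3I(f)YX² - J(f)X³ is the cubic resolvent; that is, there exists g ∈ GL₂(F_q) with g·f = det(g)⁻² X R_f(X,Y). -/
noncomputable section
open MvPolynomial

namespace Stmt11Aux

variable {F : Type*} [Field F]

/-- The action of `g = [[a,b],[c,d]]` on coefficient vectors of binary quartics. -/
def Zvec (a b c d : F) (z : Fin 5 → F) : Fin 5 → F :=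
  ![ a^4*z 0 + 4*a^3*b*z 1 + 6*a^2*b^2*z 2 + 4*a*b^3*z 3 + b^4*z 4,
     a^3*c*z 0 + (a^3*d + 3*a^2*b*c)*z 1 + (3*a^2*b*d + 3*a*b^2*c)*z 2
       + (3*a*b^2*d + b^3*c)*z 3 + b^3*d*z 4,
     a^2*c^2*z 0 + (2*a^2*c*d + 2*a*b*c^2)*z 1 + (a^2*d^2 + 4*a*b*c*d + b^2*c^2)*z 2
       + (2*a*b*d^2 + 2*b^2*c*d)*z 3 + b^2*d^2*z 4,
     a*c^3*z 0 + (3*a*c^2*d + b*c^3)*z 1 + (3*a*c*d^2 + 3*b*c^2*d)*z 2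
       + (a*d^3 + 3*b*c*d^2)*z 3 + b*d^3*z 4,
     c^4*z 0 + 4*c^3*d*z 1 + 6*c^2*d^2*z 2 + 4*c*d^3*z 3 + d^4*z 4 ]

lemma Zvec0 (a b c d : F) (z : Fin 5 → F) :
    Zvec a b c d z 0 = a^4*z 0 + 4*a^3*b*z 1 + 6*a^2*b^2*z 2 + 4*a*b^3*z 3 + b^4*z 4 := rfl

lemma Zvec1 (a b c d : F) (z : Fin 5 → F) :
    Zvec a b c d z 1 = a^3*c*z 0 + (a^3*d + 3*a^2*b*c)*z 1 + (3*a^2*b*d + 3*a*b^2*c)*z 2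
       + (3*a*b^2*d + b^3*c)*z 3 + b^3*d*z 4 := rfl

lemma Zvec2 (a b c d : F) (z : Fin 5 → F) :
    Zvec a b c d z 2 = a^2*c^2*z 0 + (2*a^2*c*d + 2*a*b*c^2)*z 1
       + (a^2*d^2 + 4*a*b*c*d + b^2*c^2)*z 2 + (2*a*b*d^2 + 2*b^2*c*d)*z 3 + b^2*d^2*z 4 := rfl

lemma Zvec3 (a b c d : F) (z : Fin 5 → F) :
    Zvec a b c d z 3 = a*c^3*z 0 + (3*a*c^2*d + b*c^3)*z 1 + (3*a*c*d^2 + 3*b*c^2*d)*z 2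
       + (a*d^3 + 3*b*c*d^2)*z 3 + b*d^3*z 4 := rfl

lemma Zvec4 (a b c d : F) (z : Fin 5 → F) :
    Zvec a b c d z 4 = c^4*z 0 + 4*c^3*d*z 1 + 6*c^2*d^2*z 2 + 4*c*d^3*z 3 + d^4*z 4 := rfl

lemma quarticAct_quartic (a b c d : F) (z : Fin 5 → F) :
    quarticAct a b c d (quartic z) = quartic (Zvec a b c d z) := by
  simp only [quartic, quarticAct, map_add, map_sub, map_mul, map_pow, map_ofNat,
    bind₁_C_right, bind₁_X_right, Zvec0, Zvec1, Zvec2, Zvec3, Zvec4]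
  simp only [Fin.isValue, reduceIte, show ((1 : Fin 2) = 0) ↔ False from by simp, if_false,
    C_add, C_mul, C_pow, map_ofNat]
  ring

lemma act_comp (a b c d a' b' c' d' : F) (f : MvPolynomial (Fin 2) F) :
    quarticAct a b c d (quarticAct a' b' c' d' f)
      = quarticAct (a*a'+b*c') (a*b'+b*d') (c*a'+d*c') (c*b'+d*d') f := by
  unfold quarticAct
  rw [bind₁_bind₁]
  have h : (fun i : Fin 2 => (bind₁ (fun i : Fin 2 =>
        if i = 0 then C d * X 0 - C b * X 1 else C a * X 1 - C c * (X 0 : MvPolynomial (Fin 2) F)))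
        (if i = 0 then C d' * X 0 - C b' * X 1
          else C a' * X 1 - C c' * (X 0 : MvPolynomial (Fin 2) F)))
      = (fun i : Fin 2 => if i = 0 then C (c*b'+d*d') * X 0 - C (a*b'+b*d') * X 1
          else C (a*a'+b*c') * X 1 - C (c*a'+d*c') * (X 0 : MvPolynomial (Fin 2) F)) := by
    funext i
    by_cases hi : i = 0 <;>
      simp only [hi, if_true, if_false, reduceIte, map_sub, map_mul, bind₁_C_right,
        bind₁_X_right, C_add, C_mul,
        show ((1 : Fin 2) = 0) = False from by simp] <;> ring
  exact congrArg (fun g => bind₁ g f) h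

lemma apolarI_Zvec (a b c d : F) (z : Fin 5 → F) :
    apolarI (Zvec a b c d z) = (a*d - b*c)^4 * apolarI z := by
  simp only [apolarI, Zvec0, Zvec1, Zvec2, Zvec3, Zvec4]
  ring

lemma catJ_Zvec (a b c d : F) (z : Fin 5 → F) :
    catJ (Zvec a b c d z) = (a*d - b*c)^6 * catJ z := by
  simp only [catJ, Matrix.det_fin_three, Matrix.cons_val', Matrix.cons_val_zero,
    Matrix.cons_val_one, Matrix.head_cons, Matrix.empty_val', Matrix.cons_val_fin_one,
    Matrix.head_fin_const, Matrix.cons_val_two, Matrix.tail_cons, Matrix.of_apply,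
    Zvec0, Zvec1, Zvec2, Zvec3, Zvec4]
  ring

lemma root_rel {z : Fin 5 → F} {s t : F} (h : (C t * X 0 - C s * X 1) ∣ quartic z) :
    z 0 * t^4 - 4*z 1*t^3*s + 6*z 2*t^2*s^2 - 4*z 3*t*s^3 + z 4*s^4 = 0 := by
  obtain ⟨p, hp⟩ := h
  have h0 := congrArg (eval ![s, t]) hp
  simp only [quartic, map_add, map_sub, map_mul, map_pow, map_ofNat, eval_C, eval_X,
    Matrix.cons_val_zero, Matrix.cons_val_one, Matrix.head_cons] at h0
  linear_combination h0

end Stmt11Aux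

open Stmt11Aux in
/-- every binary quartic form over `F_q` (char ≠ 2,3) with nonzero
discriminant and at least one linear factor over `F_q` satisfies
`g·f = det(g)⁻² X·R_f(X,Y)` for some `g ∈ GL₂(F_q)`,
where `R_f = -4Y³ + 3I(f)YX² - J(f)X³` is the cubic resolvent. -/
theorem stmt11 {F : Type*} [Field F] [Fintype F] (h2 : (2 : F) ≠ 0) (h3 : (3 : F) ≠ 0)
    (z : Fin 5 → F)
    (hdisc : apolarI z ^ 3 - catJ z ^ 2 ≠ 0)
    (hlin : ∃ s t : F, (s ≠ 0 ∨ t ≠ 0) ∧ (C t * X 0 - C s * X 1) ∣ quartic z) :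
    ∃ a b c d : F, a * d - b * c ≠ 0 ∧
      C (((a * d - b * c)⁻¹) ^ 4) * quarticAct a b c d (quartic z) =
        C (((a * d - b * c)⁻¹) ^ 2) *
          (X 0 * (-(4 : MvPolynomial (Fin 2) F) * X 1 ^ 3
            + 3 * C (apolarI z) * X 1 * X 0 ^ 2 - C (catJ z) * X 0 ^ 3)) := by
  have h4 : (4 : F) ≠ 0 := by
    have : (4 : F) = 2 * 2 := by norm_num
    rw [this]; exact mul_ne_zero h2 h2
  obtain ⟨s, t, hst, hdvd⟩ := hlin
  have hroot := root_rel hdvd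
  obtain ⟨c1, d1, hD1⟩ : ∃ c1 d1 : F, t * d1 + s * c1 ≠ 0 := by
    rcases eq_or_ne t 0 with ht | ht
    · refine ⟨1, 0, ?_⟩
      rcases hst with hs | ht'
      · simpa [ht] using hs
      · exact absurd ht ht'
    · exact ⟨0, 1, by simpa⟩
  set D1 : F := t * d1 + s * c1 with hD1def
  have hDeq : t * d1 - (-s) * c1 = D1 := by rw [hD1def]; ring
  set w : Fin 5 → F := Zvec t (-s) c1 d1 z with hwdef
  have hw0 : w 0 = 0 := by
    rw [hwdef, Zvec0]; linear_combination hroot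
  have hIw : apolarI w = D1^4 * apolarI z := by
    rw [hwdef, apolarI_Zvec, hDeq]
  have hJw : catJ w = D1^6 * catJ z := by
    rw [hwdef, catJ_Zvec, hDeq]
  have hDw : apolarI w ^ 3 - catJ w ^ 2 ≠ 0 := by
    rw [hIw, hJw]
    have heq : (D1^4 * apolarI z)^3 - (D1^6 * catJ z)^2
        = D1^12 * (apolarI z^3 - catJ z^2) := by ring
    rw [heq]
    exact mul_ne_zero (pow_ne_zero _ hD1) hdisc
  have hw1 : w 1 ≠ 0 := by
    intro h1
    apply hDw
    have hI : apolarI w = w 2 ^ 2 := by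
      rw [apolarI, hw0, h1]; field_simp; ring
    have hJ : catJ w = -(w 2 ^ 3) := by
      simp only [catJ, Matrix.det_fin_three, Matrix.cons_val', Matrix.cons_val_zero,
        Matrix.cons_val_one, Matrix.head_cons, Matrix.empty_val', Matrix.cons_val_fin_one,
        Matrix.head_fin_const, Matrix.cons_val_two, Matrix.tail_cons, Matrix.of_apply,
        hw0, h1]
      ring
    rw [hI, hJ]; ring
  set c2 : F := -(w 2) / (2 * w 1) with hc2def
  set u : Fin 5 → F := Zvec 1 0 c2 1 w with hudef
  have hu0 : u 0 = 0 := by rw [hudef, Zvec0, hw0]; ring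
  have hu1 : u 1 = w 1 := by rw [hudef, Zvec1, hw0]; ring
  have hu2 : u 2 = 0 := by
    rw [hudef, Zvec2, hw0, hc2def]
    field_simp
    ring
  have hu1ne : u 1 ≠ 0 := by rw [hu1]; exact hw1
  have hIu : apolarI u = D1^4 * apolarI z := by
    rw [hudef, apolarI_Zvec]
    simpa using hIw
  have hJu : catJ u = D1^6 * catJ z := by
    rw [hudef, catJ_Zvec]
    simpa using hJw
  have e3 : -4 * u 1 * u 3 = 3 * (D1^4 * apolarI z) := by
    rw [apolarI, hu0, hu2] at hIu
    field_simp at hIu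
    linear_combination hIu
  have hJdef : catJ z = z 0 * z 2 * z 4 - z 0 * z 3 * z 3 - z 1 * z 1 * z 4
      + z 1 * z 3 * z 2 + z 2 * z 1 * z 3 - z 2 * z 2 * z 2 := by
    simp only [catJ, Matrix.det_fin_three, Matrix.cons_val', Matrix.cons_val_zero,
      Matrix.cons_val_one, Matrix.head_cons, Matrix.empty_val', Matrix.cons_val_fin_one,
      Matrix.head_fin_const, Matrix.cons_val_two, Matrix.tail_cons, Matrix.of_apply]
  have e4 : -(u 1^2) * u 4 = D1^6 * catJ z := by
    simp only [catJ, Matrix.det_fin_three, Matrix.cons_val', Matrix.cons_val_zero,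
      Matrix.cons_val_one, Matrix.head_cons, Matrix.empty_val', Matrix.cons_val_fin_one,
      Matrix.head_fin_const, Matrix.cons_val_two, Matrix.tail_cons, Matrix.of_apply,
      hu0, hu2] at hJu
    linear_combination hJu - D1^6 * hJdef
  set d3 : F := u 1 / D1^2 with hd3def
  have hd3ne : d3 ≠ 0 := div_ne_zero hu1ne (pow_ne_zero _ hD1)
  set v : Fin 5 → F := Zvec 1 0 0 d3 u with hvdef
  have hv0 : v 0 = 0 := by rw [hvdef, Zvec0, hu0]; ring
  have hv1 : v 1 = d3 * u 1 := by rw [hvdef, Zvec1]; ring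
  have hv2 : v 2 = d3^2 * u 2 := by rw [hvdef, Zvec2]; ring
  have hv3 : v 3 = d3^3 * u 3 := by rw [hvdef, Zvec3]; ring
  have hv4 : v 4 = d3^4 * u 4 := by rw [hvdef, Zvec4]; ring
  refine ⟨1*(1*t+0*c1)+0*(c2*t+1*c1), 1*(1*(-s)+0*d1)+0*(c2*(-s)+1*d1),
    0*(1*t+0*c1)+d3*(c2*t+1*c1), 0*(1*(-s)+0*d1)+d3*(c2*(-s)+1*d1), ?_, ?_⟩
  · have heq : (1*(1*t+0*c1)+0*(c2*t+1*c1)) * (0*(1*(-s)+0*d1)+d3*(c2*(-s)+1*d1))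
        - (1*(1*(-s)+0*d1)+0*(c2*(-s)+1*d1)) * (0*(1*t+0*c1)+d3*(c2*t+1*c1))
        = d3 * D1 := by rw [hD1def]; ring
    rw [heq]
    exact mul_ne_zero hd3ne hD1
  · have hdet : (1*(1*t+0*c1)+0*(c2*t+1*c1)) * (0*(1*(-s)+0*d1)+d3*(c2*(-s)+1*d1))
        - (1*(1*(-s)+0*d1)+0*(c2*(-s)+1*d1)) * (0*(1*t+0*c1)+d3*(c2*t+1*c1))
        = d3 * D1 := by rw [hD1def]; ring
    have hstep : quarticAct (1*(1*t+0*c1)+0*(c2*t+1*c1)) (1*(1*(-s)+0*d1)+0*(c2*(-s)+1*d1))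
        (0*(1*t+0*c1)+d3*(c2*t+1*c1)) (0*(1*(-s)+0*d1)+d3*(c2*(-s)+1*d1)) (quartic z)
        = quartic v := by
      rw [← act_comp, ← act_comp, quarticAct_quartic, ← hwdef, quarticAct_quartic, ← hudef,
        quarticAct_quartic, ← hvdef]
    rw [hdet, hstep]
    have hDt : d3 * D1 ≠ 0 := mul_ne_zero hd3ne hD1
    have A0 : (d3*D1)⁻¹^4 * v 0 = 0 := by rw [hv0]; ring
    have A2 : (d3*D1)⁻¹^4 * v 2 = 0 := by rw [hv2, hu2]; ring
    have A1 : (d3*D1)⁻¹^4 * v 1 = (d3*D1)⁻¹^2 * 1 := by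
      rw [hv1, hd3def]
      field_simp
    have A3 : -4 * ((d3*D1)⁻¹^4 * v 3) = 3 * ((d3*D1)⁻¹^2 * apolarI z) := by
      have hu3 : u 3 = -3 * D1^4 * apolarI z / (4 * u 1) := by
        rw [eq_div_iff (mul_ne_zero h4 hu1ne)]
        linear_combination -e3
      rw [hv3, hu3, hd3def]
      field_simp
    have A4 : (d3*D1)⁻¹^4 * v 4 = (d3*D1)⁻¹^2 * (-(catJ z)) := by
      have hu4 : u 4 = -(D1^6 * catJ z) / (u 1^2) := by
        rw [eq_div_iff (pow_ne_zero _ hu1ne)]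
        linear_combination -e4
      rw [hv4, hu4, hd3def]
      field_simp
    have cA0 : (C ((d3*D1)⁻¹^4) : MvPolynomial (Fin 2) F) * C (v 0) = 0 := by
      rw [← C_mul, A0, map_zero]
    have cA2 : (C ((d3*D1)⁻¹^4) : MvPolynomial (Fin 2) F) * C (v 2) = 0 := by
      rw [← C_mul, A2, map_zero]
    have cA1 : (C ((d3*D1)⁻¹^4) : MvPolynomial (Fin 2) F) * C (v 1) = C ((d3*D1)⁻¹^2) := by
      rw [← C_mul, A1, mul_one]
    have cA3 : (-4 : MvPolynomial (Fin 2) F) * (C ((d3*D1)⁻¹^4) * C (v 3))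
        = 3 * (C ((d3*D1)⁻¹^2) * C (apolarI z)) := by
      rw [← C_mul, ← C_mul]
      calc (-4 : MvPolynomial (Fin 2) F) * C ((d3*D1)⁻¹^4 * v 3)
          = C (-4 * ((d3*D1)⁻¹^4 * v 3)) := by
            simp only [C_mul, map_neg, map_ofNat]
        _ = C (3 * ((d3*D1)⁻¹^2 * apolarI z)) := by rw [A3]
        _ = 3 * C ((d3*D1)⁻¹^2 * apolarI z) := by
            simp only [C_mul, map_ofNat]
    have cA4 : (C ((d3*D1)⁻¹^4) : MvPolynomial (Fin 2) F) * C (v 4)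
        = -(C ((d3*D1)⁻¹^2) * C (catJ z)) := by
      rw [← C_mul, A4, mul_neg, map_neg, C_mul]
    simp only [quartic]
    linear_combination (X 1 : MvPolynomial (Fin 2) F)^4 * cA0
      + (-4 : MvPolynomial (Fin 2) F) * X 1^3 * X 0 * cA1
      + (6 : MvPolynomial (Fin 2) F) * X 1^2 * X 0^2 * cA2
      + (X 1 : MvPolynomial (Fin 2) F) * X 0^3 * cA3
      + (X 0 : MvPolynomial (Fin 2) F)^4 * cA4
end
end

section
/- Let F be a field, char(F) ≠ 2,3, and let f = f₁f₂ where f₁, f₂ are binary quadratic forms over F each splitting over the quadratic extension as conjugate pairs (f ∈ F₄', i.e. f has 4 distinct roots, none in P¹(F), all in P¹ of the quadratic extension), with set of cross-ratios {λ, λ⁻¹} for λ ∈ {-1,2,1/2}. Then I(f) is a square in F if and only if 3 is a square in F. -/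
noncomputable section
open MvPolynomial

/-!
Write `A = (α₂ - α₀)(α₃ - α₁)` and `B = (α₂ - α₁)(α₃ - α₀)`, so that `λ = A / B`. Comparing
coefficients of `f = c ∏ (Y - αᵢX)` expresses the invariant through the roots:
`36 I(f) = c² (A² - AB + B²)`. Since `σ` swaps `α₀ ↔ α₁` and `α₂ ↔ α₃`, both `A` and `B` are
fixed by `σ`, hence lie in `F`. For `λ ∈ {-1, 2, 1/2}` one has `A² - AB + B² = 3B²` or `3A²`
with the relevant factor nonzero, so `3 I(f)` is a nonzero square in `F`, and `I(f)` is a square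
exactly when `3` is.
-/

theorem eq_zero_of_forall_quartic_eq_zero {K : Type*} [Field K]
    (h2 : (2 : K) ≠ 0) (h3 : (3 : K) ≠ 0) {a₀ a₁ a₂ a₃ a₄ : K}
    (h : ∀ t : K, a₄ * t ^ 4 + a₃ * t ^ 3 + a₂ * t ^ 2 + a₁ * t + a₀ = 0) :
    a₀ = 0 ∧ a₁ = 0 ∧ a₂ = 0 ∧ a₃ = 0 ∧ a₄ = 0 := by
  have e0 := h 0
  have e1 := h 1
  have em1 := h (-1)
  have e2 := h 2
  have em2 := h (-2)
  norm_num at e0 e1 em1 e2 em2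
  have h12 : (12 : K) ≠ 0 := by
    rw [show (12 : K) = 2 * 2 * 3 by norm_num]; simp [h2, h3]
  refine ⟨e0, ?_, ?_, ?_, ?_⟩
  · refine (mul_eq_zero.mp ?_).resolve_left h12
    linear_combination 8 * e1 - 8 * em1 - e2 + em2
  · refine (mul_eq_zero.mp ?_).resolve_left (mul_ne_zero h2 h12)
    linear_combination -30 * e0 + 16 * e1 + 16 * em1 - e2 - em2
  · refine (mul_eq_zero.mp ?_).resolve_left h12
    linear_combination -2 * e1 + 2 * em1 + e2 - em2
  · refine (mul_eq_zero.mp ?_).resolve_left (mul_ne_zero h2 h12)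
    linear_combination 6 * e0 - 4 * e1 - 4 * em1 + e2 + em2

theorem map_quartic {F K : Type*} [Field F] [Field K] (f : F →+* K) (z : Fin 5 → F) :
    map f (quartic z) = quartic (f ∘ z) := by
  simp [quartic]

theorem eval_quartic {K : Type*} [Field K] (z : Fin 5 → K) (x y : K) :
    eval ![x, y] (quartic z) =
      z 0 * y ^ 4 - 4 * z 1 * y ^ 3 * x + 6 * z 2 * y ^ 2 * x ^ 2
        - 4 * z 3 * y * x ^ 3 + z 4 * x ^ 4 := by
  simp [quartic]

theorem quartic_coeffs_of_eq_prod {K : Type*} [Field K] (h2 : (2 : K) ≠ 0) (h3 : (3 : K) ≠ 0)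
    {z : Fin 5 → K} {c : K} {α : Fin 4 → K}
    (h : quartic z = C c * ∏ i, (X 1 - C (α i) * X 0)) :
    z 0 = c ∧ 4 * z 1 = c * (α 0 + α 1 + α 2 + α 3) ∧
      6 * z 2 = c * (α 0 * α 1 + α 0 * α 2 + α 0 * α 3 + α 1 * α 2 + α 1 * α 3 + α 2 * α 3) ∧
      4 * z 3 = c * (α 0 * α 1 * α 2 + α 0 * α 1 * α 3 + α 0 * α 2 * α 3 + α 1 * α 2 * α 3) ∧
      z 4 = c * (α 0 * α 1 * α 2 * α 3) := by
  have h_eval (t : K) := congrArg (eval ![1, t]) h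
  simp only [eval_quartic, eval_mul, eval_C, Fin.prod_univ_four, eval_sub, eval_X,
    Matrix.cons_val_zero, Matrix.cons_val_one, one_pow, mul_one] at h_eval
  obtain ⟨e₀, e₁, e₂, e₃, e₄⟩ := eq_zero_of_forall_quartic_eq_zero h2 h3
    (a₄ := z 0 - c) (a₃ := -4 * z 1 + c * (α 0 + α 1 + α 2 + α 3))
    (a₂ := 6 * z 2 - c * (α 0 * α 1 + α 0 * α 2 + α 0 * α 3 + α 1 * α 2 + α 1 * α 3 + α 2 * α 3))
    (a₁ := -4 * z 3 + c * (α 0 * α 1 * α 2 + α 0 * α 1 * α 3 + α 0 * α 2 * α 3 + α 1 * α 2 * α 3))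
    (a₀ := z 4 - c * (α 0 * α 1 * α 2 * α 3)) fun t => by linear_combination h_eval t
  exact ⟨by linear_combination e₄, by linear_combination -e₃, by linear_combination e₂,
    by linear_combination -e₁, by linear_combination e₀⟩

theorem quartic_invariant_eq_of_eq_prod {K : Type*} [Field K] (h2 : (2 : K) ≠ 0) (h3 : (3 : K) ≠ 0)
    {z : Fin 5 → K} {c : K} {α : Fin 4 → K}
    (h : quartic z = C c * ∏ i, (X 1 - C (α i) * X 0)) :
    12 * (z 0 * z 4 - 4 * z 1 * z 3 + 3 * z 2 ^ 2) =
      c ^ 2 * (((α 2 - α 0) * (α 3 - α 1)) ^ 2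
        - (α 2 - α 0) * (α 3 - α 1) * ((α 2 - α 1) * (α 3 - α 0))
        + ((α 2 - α 1) * (α 3 - α 0)) ^ 2) := by
  obtain ⟨e₀, e₁, e₂, e₃, e₄⟩ := quartic_coeffs_of_eq_prod h2 h3 h
  linear_combination 12 * z 4 * e₀ + 12 * c * e₄ - 3 * (4 * z 3) * e₁
    - 3 * c * (α 0 + α 1 + α 2 + α 3) * e₃
    + (6 * z 2 + c * (α 0 * α 1 + α 0 * α 2 + α 0 * α 3 + α 1 * α 2 + α 1 * α 3 + α 2 * α 3)) * e₂

theorem exists_sq_sub_mul_add_sq_eq_three_mul_sq {K : Type*} [Field K] (h2 : (2 : K) ≠ 0)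
    {A B : K} (h : A / B = -1 ∨ A / B = 2 ∨ A / B = 1 / 2) :
    ∃ d, (d = A ∨ d = B) ∧ d ≠ 0 ∧ A ^ 2 - A * B + B ^ 2 = 3 * d ^ 2 := by
  have hAB : A / B ≠ 0 := by rcases h with h | h | h <;> simp [h, h2]
  obtain ⟨hA, hB⟩ := div_ne_zero_iff.mp hAB
  simp only [div_eq_iff hB] at h
  rcases h with h | h | h
  · exact ⟨B, .inr rfl, hB, by rw [h]; ring⟩
  · exact ⟨B, .inr rfl, hB, by rw [h]; ring⟩
  · have hB' : B = 2 * A := by rw [h]; field_simp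
    exact ⟨A, .inl rfl, hA, by rw [hB']; ring⟩

theorem AlgEquiv.apply_apply_eq_of_add_apply_mem_range {F K : Type*} [Field F] [Field K]
    [Algebra F K] (σ : K ≃ₐ[F] K) {x : K} (h : x + σ x ∈ Set.range (algebraMap F K)) :
    σ (σ x) = x := by
  obtain ⟨r, hr⟩ := h
  have := congrArg σ hr
  rw [AlgEquiv.commutes, map_add, hr] at this
  linear_combination -this

theorem exists_sq_eq_of_mul_eq_sq {F : Type*} [Field F] {a b x : F} (hx : x ≠ 0)
    (h : a * b = x ^ 2) : (∃ y, y ^ 2 = a) → ∃ y, y ^ 2 = b := by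
  rintro ⟨y, rfl⟩
  have hy : y ≠ 0 := by
    rintro rfl
    exact hx (pow_eq_zero_iff two_ne_zero |>.mp (by rw [← h]; ring))
  exact ⟨x / y, by field_simp; linear_combination -h⟩

theorem exists_sq_eq_iff_of_mul_eq_sq {F : Type*} [Field F] {a b x : F} (hx : x ≠ 0)
    (h : a * b = x ^ 2) : (∃ y, y ^ 2 = a) ↔ ∃ y, y ^ 2 = b :=
  ⟨exists_sq_eq_of_mul_eq_sq hx h, exists_sq_eq_of_mul_eq_sq hx (mul_comm a b ▸ h)⟩

theorem stmt16_general {F K : Type*} [Field F] [Field K] [Algebra F K]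
    (h2 : (2 : F) ≠ 0) (h3 : (3 : F) ≠ 0)
    (σ : K ≃ₐ[F] K)
    (hfix : ∀ x : K, σ x = x ↔ x ∈ Set.range (algebraMap F K))
    (α : Fin 4 → K)
    (hconj1 : α 1 = σ (α 0)) (hconj2 : α 3 = σ (α 2))
    (hf₁ : α 0 + α 1 ∈ Set.range (algebraMap F K) ∧
      α 0 * α 1 ∈ Set.range (algebraMap F K))
    (hf₂ : α 2 + α 3 ∈ Set.range (algebraMap F K) ∧
      α 2 * α 3 ∈ Set.range (algebraMap F K))
    (z : Fin 5 → F) (c : F) (hc : c ≠ 0)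
    (hf : MvPolynomial.map (algebraMap F K) (quartic z)
      = C (algebraMap F K c) * ∏ i, (X 1 - C (α i) * X 0))
    (lam : K)
    (hlam : lam = ((α 2 - α 0) * (α 3 - α 1)) / ((α 2 - α 1) * (α 3 - α 0)))
    (h1728 : lam = -1 ∨ lam = 2 ∨ lam = 1 / 2) :
    (∃ x : F, x ^ 2 = apolarI z) ↔ (∃ y : F, y ^ 2 = 3) := by
  have h2K : (2 : K) ≠ 0 := by
    simpa only [map_ofNat, map_zero] using (algebraMap F K).injective.ne h2
  have h3K : (3 : K) ≠ 0 := by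
    simpa only [map_ofNat, map_zero] using (algebraMap F K).injective.ne h3
  rw [map_quartic] at hf
  have hI := quartic_invariant_eq_of_eq_prod h2K h3K hf
  have hσ1 : σ (α 1) = α 0 := by
    rw [hconj1] at hf₁ ⊢
    exact σ.apply_apply_eq_of_add_apply_mem_range hf₁.1
  have hσ3 : σ (α 3) = α 2 := by
    rw [hconj2] at hf₂ ⊢
    exact σ.apply_apply_eq_of_add_apply_mem_range hf₂.1
  obtain ⟨d, hdAB, hd0, hdsq⟩ := exists_sq_sub_mul_add_sq_eq_three_mul_sq h2K (hlam ▸ h1728)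
  have hσd : σ d = d := by
    rcases hdAB with rfl | rfl <;>
      simp only [map_mul, map_sub, hσ1, hσ3, ← hconj1, ← hconj2] <;> ring
  obtain ⟨b, rfl⟩ := (hfix d).mp hσd
  have hIb : 4 * (z 0 * z 4 - 4 * z 1 * z 3 + 3 * z 2 ^ 2) = (c * b) ^ 2 := by
    apply (algebraMap F K).injective
    simp only [map_add, map_sub, map_mul, map_pow, map_ofNat, Function.comp_apply] at hI ⊢
    exact mul_left_cancel₀ h3K (by linear_combination hI + algebraMap F K c ^ 2 * hdsq)
  refine exists_sq_eq_iff_of_mul_eq_sq (x := c * b / 2) ?_ ?_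
  · exact div_ne_zero (mul_ne_zero hc (by rintro rfl; simp at hd0)) h2
  · rw [apolarI]
    field_simp
    linear_combination hIb

/-- let `f = f₁f₂` be a quartic form over `F` (char ≠ 2,3) whose two
quadratic factors `f₁, f₂` are defined over `F` and split over a quadratic extension `K`
(with conjugation `σ`, whose fixed field is `F`) into Galois-conjugate pairs of roots,
none rational, all distinct, and whose cross-ratio `λ` (for the restricted ordering
`(r₁, σr₁, r₂, σr₂)`) lies in `{-1, 2, 1/2}` (i.e. `j(f) = 1728`).
Then `I(f)` is a square in `F` iff `3` is a square in `F`. -/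
theorem stmt16 {F K : Type*} [Field F] [Field K] [Algebra F K]
    (h2 : (2 : F) ≠ 0) (h3 : (3 : F) ≠ 0)
    (σ : K ≃ₐ[F] K)
    (hfix : ∀ x : K, σ x = x ↔ x ∈ Set.range (algebraMap F K))
    (α : Fin 4 → K)
    (hconj1 : α 1 = σ (α 0)) (hconj2 : α 3 = σ (α 2))
    (hirr : ∀ i, α i ∉ Set.range (algebraMap F K))
    (hdist : ∀ i j, i ≠ j → α i ≠ α j)
    (hf₁ : α 0 + α 1 ∈ Set.range (algebraMap F K) ∧
      α 0 * α 1 ∈ Set.range (algebraMap F K))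
    (hf₂ : α 2 + α 3 ∈ Set.range (algebraMap F K) ∧
      α 2 * α 3 ∈ Set.range (algebraMap F K))
    (z : Fin 5 → F) (c : F) (hc : c ≠ 0)
    (hf : MvPolynomial.map (algebraMap F K) (quartic z)
      = C (algebraMap F K c) * ∏ i, (X 1 - C (α i) * X 0))
    (lam : K)
    (hlam : lam = ((α 2 - α 0) * (α 3 - α 1)) / ((α 2 - α 1) * (α 3 - α 0)))
    (h1728 : lam = -1 ∨ lam = 2 ∨ lam = 1 / 2) :
    (∃ x : F, x ^ 2 = apolarI z) ↔ (∃ y : F, y ^ 2 = 3) :=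
  stmt16_general h2 h3 σ hfix α hconj1 hconj2 hf₁ hf₂ z c hc hf lam hlam h1728
end
end

section
/- Let F be a field with |F| ≥ m+2 if F is finite, and V = F². The GL₂(F)-representation D_m V = (Sym^m(V*))* is irreducible if and only if all binomial coefficients binom(m,0), …, binom(m,m) are nonzero in F; equivalently, either char(F) = 0, or char(F) = p and, writing m+1 = pᵃ·b with gcd(b,p)=1, one has b < p. -/
noncomputable section
open Polynomial

/-- The matrix of the induced action `g^[m]` of `g = [[a,b],[c,d]]` on the divided power
`D_m V` (`V = F²`), characterized by `ν_m(g·(s,t)) = g^[m] ν_m(s,t)` for the Veronese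
map `ν_m`: row `i`, column `j` is the coefficient of `s^{m-j}t^j` in
`(as+bt)^{m-i}(cs+dt)^i`. -/
def divMat (m : ℕ) {F : Type*} [Field F] (a b c d : F) :
    Matrix (Fin (m + 1)) (Fin (m + 1)) F :=
  Matrix.of fun i j =>
    (((C a * X + C b) ^ (m - (i : ℕ)) * (C c * X + C d) ^ (i : ℕ)).coeff (m - (j : ℕ)))

namespace Stmt18Aux

open Finset

lemma coeff_linpow {F : Type*} [CommRing F] (a b : F) (k n : ℕ) :
    ((C a * X + C b) ^ k).coeff n = (k.choose n : F) * a ^ n * b ^ (k - n) := by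
  rw [add_pow, finset_sum_coeff]
  have h : ∀ r ∈ range (k+1),
      ((C a * X) ^ r * C b ^ (k - r) * (k.choose r : F[X])).coeff n
        = if n = r then (k.choose n : F) * a ^ n * b ^ (k - n) else 0 := by
    intro r hr
    have e : (C a * X) ^ r * C b ^ (k - r) * (k.choose r : F[X])
        = C ((k.choose r : F) * a ^ r * b ^ (k - r)) * X ^ r := by
      rw [mul_pow, ← C_pow, ← C_pow, map_mul, map_mul, C_eq_natCast]
      ring
    rw [e, coeff_C_mul, coeff_X_pow]
    by_cases h : n = r <;> simp [h]
  rw [Finset.sum_congr rfl h, Finset.sum_ite_eq]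
  by_cases hn : n ∈ range (k+1)
  · simp [hn]
  · simp only [hn, if_false]
    rw [Nat.choose_eq_zero_of_lt (by simpa using hn)]
    simp

lemma divMat_apply {F : Type*} [Field F] (m : ℕ) (a b c d : F) (i j : Fin (m+1)) :
    divMat m a b c d i j =
      ∑ r ∈ range (m - (j:ℕ) + 1),
        (((m - (i:ℕ)).choose r : F) * a ^ r * b ^ (m - (i:ℕ) - r)) *
        (((i:ℕ).choose (m - (j:ℕ) - r) : F) * c ^ (m - (j:ℕ) - r) *
          d ^ ((i:ℕ) - (m - (j:ℕ) - r))) := by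
  show (((C a * X + C b) ^ (m - (i : ℕ)) * (C c * X + C d) ^ (i : ℕ)).coeff (m - (j : ℕ))) = _
  rw [coeff_mul, Finset.Nat.sum_antidiagonal_eq_sum_range_succ_mk]
  exact Finset.sum_congr rfl fun r _ => by rw [coeff_linpow, coeff_linpow]

lemma trinom (s u r w : ℕ) :
    ((s+u)+(r+w)).choose (s+u) * ((s+u).choose s * (r+w).choose r)
      = ((s+u)+(r+w)).choose (r+s) * ((r+s).choose s * (u+w).choose u) := by
  have h1 : ∀ x y : ℕ, (x+y).choose x * (x.factorial * y.factorial) = (x+y).factorial := by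
    intro x y
    have := Nat.choose_mul_factorial_mul_factorial (Nat.le_add_right x y)
    simpa [Nat.add_sub_cancel_left, mul_assoc] using this
  have hpos : 0 < s.factorial * u.factorial * (r.factorial * w.factorial) :=
    by positivity
  apply Nat.eq_of_mul_eq_mul_right hpos
  have e1 : ((s+u)+(r+w)).choose (s+u) * ((s+u).choose s * (r+w).choose r) *
      (s.factorial * u.factorial * (r.factorial * w.factorial))
      = ((s+u)+(r+w)).factorial := by
    calc ((s+u)+(r+w)).choose (s+u) * ((s+u).choose s * (r+w).choose r) *
        (s.factorial * u.factorial * (r.factorial * w.factorial))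
        = ((s+u)+(r+w)).choose (s+u) * (((s+u).choose s * (s.factorial * u.factorial)) *
            ((r+w).choose r * (r.factorial * w.factorial))) := by ring
      _ = ((s+u)+(r+w)).choose (s+u) * ((s+u).factorial * (r+w).factorial) := by
            rw [h1 s u, h1 r w]
      _ = ((s+u)+(r+w)).factorial := h1 (s+u) (r+w)
  have e2 : ((s+u)+(r+w)).choose (r+s) * ((r+s).choose s * (u+w).choose u) *
      (s.factorial * u.factorial * (r.factorial * w.factorial))
      = ((s+u)+(r+w)).factorial := by
    have hc : (s+u)+(r+w) = (r+s)+(u+w) := by ring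
    calc ((s+u)+(r+w)).choose (r+s) * ((r+s).choose s * (u+w).choose u) *
        (s.factorial * u.factorial * (r.factorial * w.factorial))
        = ((r+s)+(u+w)).choose (r+s) * (((r+s).choose s * (s.factorial * r.factorial)) *
            ((u+w).choose u * (u.factorial * w.factorial))) := by rw [hc]; ring
      _ = ((r+s)+(u+w)).choose (r+s) * ((r+s).factorial * (u+w).factorial) := by
            have := h1 s r
            rw [show (r+s) = (s+r) from by ring, h1 s r, h1 u w]
      _ = ((r+s)+(u+w)).factorial := h1 (r+s) (u+w)
      _ = ((s+u)+(r+w)).factorial := by rw [hc]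
  rw [e1, e2]

lemma key_vanish {F : Type*} [Field F] {m i j r s : ℕ} (hi : i ≤ m) (hj : j ≤ m)
    (hchi : ((m.choose i : ℕ) : F) ≠ 0) (hchj : ((m.choose j : ℕ) : F) = 0)
    (hrs : r + s = m - j) :
    (((m - i).choose r : ℕ) : F) * ((i.choose s : ℕ) : F) = 0 := by
  by_cases hs : s ≤ i
  · by_cases hr : r ≤ m - i
    · obtain ⟨u, hu⟩ : ∃ u, i = s + u := ⟨i - s, by omega⟩
      obtain ⟨w, hw⟩ : ∃ w, m - i = r + w := ⟨m - i - r, by omega⟩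
      have hm : m = (s + u) + (r + w) := by omega
      have hnat := trinom s u r w
      have hcast := congrArg (Nat.cast : ℕ → F) hnat
      push_cast at hcast
      rw [← hm, ← hu, ← hw] at hcast
      have hsym : m.choose (r+s) = m.choose j := by
        rw [hrs, Nat.choose_symm hj]
      rw [hsym, hchj, zero_mul] at hcast
      rcases mul_eq_zero.mp hcast with h | h
      · exact absurd h hchi
      · rcases mul_eq_zero.mp h with h' | h'
        · simp [h']
        · simp [h']
    · simp [Nat.choose_eq_zero_of_lt (show m - i < r by omega)]
  · simp [Nat.choose_eq_zero_of_lt (show i < s by omega)]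

lemma proj_mem {F : Type*} [Field F] {n : ℕ} (W : Submodule F (Fin n → F)) (d : Fin n → F)
    (hd : Function.Injective d)
    (hW : ∀ v ∈ W, (fun l => d l * v l) ∈ W) {v : Fin n → F} (hv : v ∈ W) (i : Fin n) :
    v i • (Pi.single i 1 : Fin n → F) ∈ W := by
  classical
  set w : ℕ → (Fin n → F) := fun k => fun l => d l ^ k * v l with hw
  have hwW : ∀ k, w k ∈ W := by
    intro k
    induction k with
    | zero => simpa [hw] using hv
    | succ k ih =>
      have := hW _ ih
      convert this using 1
      funext l
      simp [hw, pow_succ]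
      ring
  set B : Matrix (Fin n) (Fin n) F := Matrix.of (fun k l => d l ^ (k:ℕ)) with hB
  have hdet : IsUnit B.det := by
    have : B = Matrix.transpose (Matrix.vandermonde d) := by
      ext k l; simp [hB, Matrix.vandermonde_apply, Matrix.transpose_apply]
    rw [this, Matrix.det_transpose]
    exact (Matrix.det_vandermonde_ne_zero_iff.mpr hd).isUnit
  have hinv : B⁻¹ * B = 1 := Matrix.nonsing_inv_mul B hdet
  have key : v i • (Pi.single i 1 : Fin n → F) = ∑ k : Fin n, B⁻¹ i k • w (k:ℕ) := by
    funext l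
    have h2 : (∑ k : Fin n, B⁻¹ i k • w (k:ℕ)) l
        = (∑ k : Fin n, B⁻¹ i k * B k l) * v l := by
      rw [Finset.sum_mul]
      simp only [Finset.sum_apply, Pi.smul_apply, smul_eq_mul]
      exact Finset.sum_congr rfl fun k _ => by simp [hw, hB]; ring
    have h3 : (∑ k : Fin n, B⁻¹ i k * B k l) = (1 : Matrix (Fin n) (Fin n) F) i l := by
      rw [← hinv]; simp [Matrix.mul_apply]
    rw [h2, h3]
    by_cases h : l = i
    · subst h; simp [Matrix.one_apply]
    · simp [Matrix.one_apply, Ne.symm h, h, Pi.single_apply]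
  rw [key]
  exact Submodule.sum_mem _ fun k _ => Submodule.smul_mem _ _ (hwW k)

lemma not_dvd_choose_small {p n k : ℕ} (hp : p.Prime) (hn : n < p) (hk : k ≤ n) :
    ¬ p ∣ n.choose k := by
  intro h
  have hd : n.choose k ∣ n.factorial :=
    ⟨k.factorial * (n-k).factorial, by rw [← Nat.choose_mul_factorial_mul_factorial hk]; ring⟩
  have := (Nat.Prime.dvd_factorial hp).mp (h.trans hd)
  omega

lemma nt_suff {p : ℕ} (hp : p.Prime) : ∀ a b m : ℕ, m + 1 = p ^ a * b → b < p →
    ∀ k, k ≤ m → ¬ p ∣ m.choose k := by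
  haveI : Fact p.Prime := ⟨hp⟩
  intro a
  induction a with
  | zero =>
    intro b m hm hb k hk
    refine not_dvd_choose_small hp ?_ hk
    simp only [pow_zero, one_mul] at hm
    omega
  | succ a ih =>
    intro b m hm hb k hk hdvd
    have hb1 : 1 ≤ b := Nat.one_le_iff_ne_zero.mpr (by rintro rfl; simp at hm)
    set X := p ^ a * b with hX
    have hX1 : 1 ≤ X :=
      Nat.one_le_iff_ne_zero.mpr (Nat.mul_ne_zero (pow_ne_zero _ hp.pos.ne') (by omega))
    obtain ⟨X0, hX0⟩ : ∃ X0, X = X0 + 1 := ⟨X - 1, by omega⟩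
    have hkey : m + 1 = p * X := by rw [hm, pow_succ]; ring
    have e : p * X = p * X0 + p := by rw [hX0]; ring
    have hp2 := hp.two_le
    have hmeq : m = p * X0 + (p - 1) := by omega
    have hmod : m % p = p - 1 := by
      rw [hmeq, Nat.mul_add_mod, Nat.mod_eq_of_lt (by omega)]
    have hdivm : m / p = X0 := by
      rw [hmeq, Nat.mul_add_div (by omega), Nat.div_eq_of_lt (by omega), Nat.add_zero]
    have lucas := Choose.choose_modEq_choose_mod_mul_choose_div_nat (p := p) (n := m) (k := k)
    rw [hmod, hdivm] at lucas
    have hkp : k % p ≤ p - 1 := by have := Nat.mod_lt k (show 0 < p by omega); omega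
    have h1 : ¬ p ∣ (p-1).choose (k % p) := not_dvd_choose_small hp (by omega) hkp
    have h2 : ¬ p ∣ X0.choose (k / p) := by
      refine ih b X0 (by omega) hb (k / p) ?_
      rw [← hdivm]
      exact Nat.div_le_div_right hk
    have hdd : p ∣ (p-1).choose (k % p) * X0.choose (k / p) := by
      have h0 : m.choose k ≡ 0 [MOD p] := (Nat.modEq_zero_iff_dvd).mpr hdvd
      exact (Nat.modEq_zero_iff_dvd).mp (lucas.symm.trans h0)
    rcases (Nat.Prime.dvd_mul hp).mp hdd with h | h
    · exact h1 h
    · exact h2 h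

lemma nt_nec {p : ℕ} (hp : p.Prime) : ∀ m : ℕ, (∀ k, k ≤ m → ¬ p ∣ m.choose k) →
    ∃ a b : ℕ, m + 1 = p ^ a * b ∧ ¬ p ∣ b ∧ b < p := by
  haveI : Fact p.Prime := ⟨hp⟩
  have hp2 := hp.two_le
  intro m
  induction m using Nat.strong_induction_on with
  | _ m ih =>
    intro H
    by_cases hmp : m + 1 < p
    · exact ⟨0, m + 1, by simp, fun h => by have := Nat.le_of_dvd (by omega) h; omega, hmp⟩
    · by_cases he : m + 1 = p
      · exact ⟨1, 1, by simp [he], by simpa using hp.one_lt.ne', hp.one_lt⟩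
      · have hmge : p ≤ m := by omega
        have hmod : m % p = p - 1 := by
          by_contra hne
          have hlt : m % p < p - 1 := by
            have := Nat.mod_lt m (show 0 < p by omega); omega
          set r := m % p with hr
          have hk : r + 1 ≤ m := by omega
          apply H (r+1) hk
          have lucas := Choose.choose_modEq_choose_mod_mul_choose_div_nat
            (p := p) (n := m) (k := r + 1)
          rw [Nat.mod_eq_of_lt (show r + 1 < p by omega), ← hr,
            show r.choose (r+1) = 0 from Nat.choose_eq_zero_of_lt (by omega),
            Nat.zero_mul] at lucas
          exact (Nat.modEq_zero_iff_dvd).mp lucas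
        set m' := m / p with hm'
        have hm'lt : m' < m := Nat.div_lt_self (by omega) hp.one_lt
        have hdm : p * m' + m % p = m := by rw [hm']; exact Nat.div_add_mod m p
        have hmeq : m = p * m' + (p - 1) := by omega
        have H' : ∀ k', k' ≤ m' → ¬ p ∣ m'.choose k' := by
          intro k' hk' hdvd
          have hle : p * k' ≤ m := by
            have := Nat.mul_le_mul_left p hk'
            omega
          apply H (p * k') hle
          have lucas := Choose.choose_modEq_choose_mod_mul_choose_div_nat
            (p := p) (n := m) (k := p * k')
          rw [hmod, Nat.mul_mod_right, Nat.choose_zero_right,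
            Nat.mul_div_cancel_left k' (show 0 < p by omega), Nat.one_mul, ← hm'] at lucas
          have h0 : m'.choose k' ≡ 0 [MOD p] := (Nat.modEq_zero_iff_dvd).mpr hdvd
          exact (Nat.modEq_zero_iff_dvd).mp (lucas.trans h0)
        obtain ⟨a, b, h1, h2, h3⟩ := ih m' hm'lt H'
        refine ⟨a + 1, b, ?_, h2, h3⟩
        have e : p * (m' + 1) = p * m' + p := by ring
        have : m + 1 = p * (m' + 1) := by omega
        rw [this, h1, pow_succ]
        ring

lemma divMat_diag {F : Type*} [Field F] (m : ℕ) (t : F) :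
    divMat m 1 0 0 t = Matrix.diagonal (fun i : Fin (m+1) => t ^ (i : ℕ)) := by
  ext i j
  have hi : (i : ℕ) ≤ m := Nat.lt_succ_iff.mp i.isLt
  have hj : (j : ℕ) ≤ m := Nat.lt_succ_iff.mp j.isLt
  show (((C (1:F)) * X + C 0) ^ (m - (i : ℕ)) * ((C (0:F)) * X + C t) ^ (i : ℕ)).coeff
      (m - (j : ℕ)) = _
  rw [map_one, map_zero, one_mul, zero_mul, add_zero, zero_add, ← C_pow, mul_comm,
    coeff_C_mul, coeff_X_pow]
  rw [Matrix.diagonal_apply]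
  by_cases h : i = j
  · subst h; simp
  · have : ¬ (m - (j:ℕ) = m - (i:ℕ)) := by
      intro he
      exact h (Fin.ext (by omega))
    simp [this, h]

lemma divMat_upper {F : Type*} [Field F] (m : ℕ) (i j : Fin (m+1)) :
    divMat m 1 1 0 1 i j = (((m - (i:ℕ)).choose (m - (j:ℕ)) : ℕ) : F) := by
  show (((C (1:F)) * X + C 1) ^ (m - (i : ℕ)) * ((C (0:F)) * X + C 1) ^ (i : ℕ)).coeff
      (m - (j : ℕ)) = _
  rw [map_one, map_zero, one_mul, zero_mul, zero_add, one_pow, mul_one, coeff_X_add_one_pow]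

lemma coeff_top (F : Type*) [Field F] (k n : ℕ) (hk : k ≤ n) :
    ((X:F[X]) ^ (n - k) * (X + 1) ^ k).coeff n = 1 := by
  obtain ⟨a, rfl⟩ : ∃ a, n = k + a := ⟨n - k, by omega⟩
  rw [show k + a - k = a from by omega, Polynomial.coeff_X_pow_mul,
    coeff_X_add_one_pow, Nat.choose_self, Nat.cast_one]

lemma divMat_lower_col0 {F : Type*} [Field F] (m : ℕ) (i : Fin (m+1)) :
    divMat m (1:F) 0 1 1 i 0 = 1 := by
  have hi : (i : ℕ) ≤ m := Nat.lt_succ_iff.mp i.isLt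
  have e : divMat m (1:F) 0 1 1 i 0
      = ((X : F[X]) ^ (m - (i : ℕ)) * (X + 1) ^ (i : ℕ)).coeff m := by
    simp [divMat]
  rw [e, coeff_top F (i:ℕ) m hi]

lemma exists_t {F : Type*} [Field F] (m : ℕ) (hF : Finite F → m + 2 ≤ Nat.card F) :
    ∃ t : F, t ≠ 0 ∧ ∀ i j : ℕ, i ≤ m → j ≤ m → t ^ i = t ^ j → i = j := by
  classical
  cases finite_or_infinite F with
  | inl hfin =>
    have hq : m + 2 ≤ Nat.card F := hF hfin
    obtain ⟨g, hg⟩ := IsCyclic.exists_generator (α := Fˣ)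
    have horder : orderOf g = Nat.card F - 1 := by
      rw [orderOf_eq_card_of_forall_mem_zpowers hg, Nat.card_units]
    refine ⟨(g : F), Units.ne_zero g, ?_⟩
    intro i j hi hj hij
    have h1 : (g ^ i : Fˣ) = g ^ j := by
      ext
      push_cast
      exact hij
    have hinj := pow_injOn_Iio_orderOf (G := Fˣ) (x := g)
    have hlt : ∀ k : ℕ, k ≤ m → k < orderOf g := by
      intro k hk
      rw [horder]; omega
    exact hinj (Set.mem_Iio.mpr (hlt i hi)) (Set.mem_Iio.mpr (hlt j hj)) h1
  | inr hinf =>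
    have hfin : ({(0:F)} ∪ ⋃ d ∈ Finset.Icc 1 m, {x : F | x ^ d = 1}).Finite := by
      refine (Set.finite_singleton 0).union ?_
      refine Set.Finite.biUnion (Finset.Icc 1 m).finite_toSet ?_
      intro d hd
      have hd1 : 1 ≤ d := (Finset.mem_Icc.mp hd).1
      refine Set.Finite.subset (Polynomial.nthRoots d (1:F)).toFinset.finite_toSet ?_
      intro x hx
      simp only [Set.mem_setOf_eq] at hx
      simp only [Finset.mem_coe, Multiset.mem_toFinset,
        Polynomial.mem_nthRoots (show 0 < d by omega)]
      exact hx
    obtain ⟨t, ht⟩ := (hfin.infinite_compl).nonempty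
    simp only [Set.mem_compl_iff, Set.mem_union, Set.mem_singleton_iff, Set.mem_iUnion,
      not_or, not_exists, Set.mem_setOf_eq] at ht
    obtain ⟨ht0, ht1⟩ := ht
    refine ⟨t, ht0, ?_⟩
    have key : ∀ i j : ℕ, i ≤ m → j ≤ m → i < j → t ^ i ≠ t ^ j := by
      intro i j hi hj hij heq
      have hne : t ^ i ≠ 0 := pow_ne_zero _ ht0
      have : t ^ i * t ^ (j - i) = t ^ i * 1 := by
        rw [← pow_add, mul_one, show i + (j - i) = j from by omega, heq]
      have hd : t ^ (j - i) = 1 := mul_left_cancel₀ hne this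
      exact ht1 (j - i) (Finset.mem_Icc.mpr ⟨by omega, by omega⟩) hd
    intro i j hi hj hij
    rcases lt_trichotomy i j with h | h | h
    · exact absurd hij (key i j hi hj h)
    · exact h
    · exact absurd hij.symm (key j i hj hi h)

/-- The coordinate subspace supported on indices whose binomial coefficient vanishes in `F`. -/
def badSub (F : Type*) [Field F] (m : ℕ) : Submodule F (Fin (m + 1) → F) where
  carrier := {v | ∀ j : Fin (m + 1), ((m.choose (j:ℕ) : ℕ) : F) ≠ 0 → v j = 0}
  add_mem' := fun hu hv j hj => by
    simp only [Set.mem_setOf_eq] at hu hv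
    simp [hu j hj, hv j hj]
  zero_mem' := fun j hj => rfl
  smul_mem' := fun c v hv j hj => by
    simp only [Set.mem_setOf_eq] at hv
    simp [hv j hj]

lemma mem_badSub {F : Type*} [Field F] {m : ℕ} {v : Fin (m+1) → F} :
    v ∈ badSub F m ↔ ∀ j : Fin (m + 1), ((m.choose (j:ℕ) : ℕ) : F) ≠ 0 → v j = 0 :=
  Iff.rfl

end Stmt18Aux

open Stmt18Aux in
/-- over a field `F` (with `|F| ≥ m+2` if finite), the `GL₂(F)`-representation
`D_m V` is irreducible iff all binomial coefficients `binom(m,k)`, `0 ≤ k ≤ m`, are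
nonzero in `F`; equivalently, either `char F = 0`, or `char F = p` and, writing
`m+1 = pᵃ·b` with `gcd(b,p) = 1`, one has `b < p`. -/
theorem stmt18 {F : Type*} [Field F] (m : ℕ) (hF : Finite F → m + 2 ≤ Nat.card F) :
    ((∀ W : Submodule F (Fin (m + 1) → F),
        (∀ a b c d : F, a * d - b * c ≠ 0 →
          ∀ v ∈ W, (divMat m a b c d).mulVec v ∈ W) → W = ⊥ ∨ W = ⊤) ↔
      (∀ k : ℕ, k ≤ m → ((m.choose k : ℕ) : F) ≠ 0)) ∧
    ((∀ k : ℕ, k ≤ m → ((m.choose k : ℕ) : F) ≠ 0) ↔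
      (ringChar F = 0 ∨ ∃ p a b : ℕ, p.Prime ∧ ringChar F = p ∧
        m + 1 = p ^ a * b ∧ ¬ p ∣ b ∧ b < p)) := by
  classical
  constructor
  · constructor
    · -- irreducible → all binomials nonzero
      intro hirr
      by_contra hnot
      push_neg at hnot
      obtain ⟨k0, hk0, hch0⟩ := hnot
      have hWinv : ∀ a b c d : F, a * d - b * c ≠ 0 →
          ∀ v ∈ badSub F m, (divMat m a b c d).mulVec v ∈ badSub F m := by
        intro a b c d _ v hv
        rw [mem_badSub] at hv ⊢
        intro i hi
        have hi' : (i : ℕ) ≤ m := Nat.lt_succ_iff.mp i.isLt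
        show ∑ j, divMat m a b c d i j * v j = 0
        apply Finset.sum_eq_zero
        intro j _
        by_cases hj : ((m.choose (j:ℕ) : ℕ) : F) ≠ 0
        · rw [hv j hj, mul_zero]
        · rw [not_not] at hj
          have hj' : (j : ℕ) ≤ m := Nat.lt_succ_iff.mp j.isLt
          have hMij : divMat m a b c d i j = 0 := by
            rw [divMat_apply]
            apply Finset.sum_eq_zero
            intro r hr
            have hr' : r ≤ m - (j:ℕ) := by
              simpa [Nat.lt_succ_iff] using Finset.mem_range.mp hr
            have hv0 := key_vanish (F := F) (m := m) (i := (i:ℕ)) (j := (j:ℕ))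
              (r := r) (s := m - (j:ℕ) - r) hi' hj' hi hj (by omega)
            rcases mul_eq_zero.mp hv0 with h | h
            · rw [h]; ring
            · rw [h]; ring
          rw [hMij, zero_mul]
      rcases hirr (badSub F m) hWinv with hbot | htop
      · have hk0m : (Pi.single (⟨k0, by omega⟩ : Fin (m+1)) 1 : Fin (m+1) → F) ∈ badSub F m := by
          rw [mem_badSub]
          intro j hj
          have hne : j ≠ (⟨k0, by omega⟩ : Fin (m+1)) := by
            rintro rfl
            exact hj hch0
          exact Pi.single_eq_of_ne hne 1
        rw [hbot, Submodule.mem_bot] at hk0m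
        have := congrFun hk0m (⟨k0, by omega⟩ : Fin (m+1))
        rw [Pi.single_eq_same] at this
        exact one_ne_zero this
      · have h0 : (Pi.single (0 : Fin (m+1)) 1 : Fin (m+1) → F) ∈ badSub F m := by
          rw [htop]; trivial
        rw [mem_badSub] at h0
        have hc : ((m.choose ((0 : Fin (m+1)):ℕ) : ℕ) : F) ≠ 0 := by
          simp
        have := h0 0 hc
        rw [Pi.single_eq_same] at this
        exact one_ne_zero this
    · -- all binomials nonzero → irreducible
      intro hch W hWinv
      by_cases hbot : W = ⊥
      · exact Or.inl hbot
      right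
      obtain ⟨t, ht0, htinj⟩ := exists_t m hF
      set d : Fin (m+1) → F := fun l => t ^ (l:ℕ) with hd
      have hdinj : Function.Injective d := by
        intro x y hxy
        exact Fin.ext (htinj _ _ (Nat.lt_succ_iff.mp x.isLt) (Nat.lt_succ_iff.mp y.isLt) hxy)
      have hdiagW : ∀ v ∈ W, (fun l => d l * v l) ∈ W := by
        intro v hv
        have h := hWinv 1 0 0 t (by simpa using ht0) v hv
        rw [divMat_diag] at h
        have : (Matrix.diagonal (fun i : Fin (m+1) => t ^ (i : ℕ))).mulVec v
            = fun l => d l * v l := by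
          funext l
          rw [Matrix.mulVec_diagonal]
        rwa [this] at h
      have hproj : ∀ {v : Fin (m+1) → F}, v ∈ W →
          ∀ i : Fin (m+1), v i • (Pi.single i 1 : Fin (m+1) → F) ∈ W :=
        fun hv i => proj_mem W d hdinj hdiagW hv i
      obtain ⟨v, hvW, hvne⟩ := Submodule.exists_mem_ne_zero_of_ne_bot hbot
      obtain ⟨i, hvi⟩ : ∃ i, v i ≠ 0 := by
        by_contra h
        push_neg at h
        exact hvne (funext h)
      have hei : (Pi.single i 1 : Fin (m+1) → F) ∈ W := by
        have h1 := hproj hvW i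
        have h2 := Submodule.smul_mem W (v i)⁻¹ h1
        rwa [smul_smul, inv_mul_cancel₀ hvi, one_smul] at h2
      have hi' : (i : ℕ) ≤ m := Nat.lt_succ_iff.mp i.isLt
      -- apply the upper unipotent to get e₀
      have huW := hWinv 1 1 0 1 (by norm_num) _ hei
      rw [show (divMat m (1:F) 1 0 1).mulVec (Pi.single i 1) = fun l => divMat m (1:F) 1 0 1 l i * 1 from by
        funext l; simp [Matrix.mulVec_single]] at huW
      have hu0 : (fun l => divMat m (1:F) 1 0 1 l i * 1) 0 = ((m.choose (i:ℕ) : ℕ) : F) := by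
        simp only [mul_one]
        rw [divMat_upper]
        have h0 : ((0 : Fin (m+1)) : ℕ) = 0 := rfl
        rw [h0, Nat.sub_zero, Nat.choose_symm hi']
      have hu0ne : (fun l => divMat m (1:F) 1 0 1 l i * 1) 0 ≠ 0 := by
        rw [hu0]; exact hch (i:ℕ) hi'
      have he0 : (Pi.single (0 : Fin (m+1)) 1 : Fin (m+1) → F) ∈ W := by
        have h1 := hproj huW (0 : Fin (m+1))
        have h2 := Submodule.smul_mem W ((fun l => divMat m (1:F) 1 0 1 l i * 1) 0)⁻¹ h1
        rwa [smul_smul, inv_mul_cancel₀ hu0ne, one_smul] at h2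
      -- apply the lower unipotent to get all eₖ
      have hlW := hWinv 1 0 1 1 (by norm_num) _ he0
      rw [show (divMat m (1:F) 0 1 1).mulVec (Pi.single 0 1) = fun l => divMat m (1:F) 0 1 1 l 0 * 1 from by
        funext l; simp [Matrix.mulVec_single]] at hlW
      have hones : (fun l => divMat m (1:F) 0 1 1 l 0 * 1) = fun _ => (1:F) := by
        funext l
        rw [divMat_lower_col0, mul_one]
      rw [hones] at hlW
      have hek : ∀ k : Fin (m+1), (Pi.single k 1 : Fin (m+1) → F) ∈ W := by
        intro k
        have h1 := hproj hlW k
        simpa using h1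
      rw [Submodule.eq_top_iff']
      intro x
      have hx : x = ∑ k : Fin (m+1), x k • (Pi.single k 1 : Fin (m+1) → F) := by
        have h1 : ∀ k : Fin (m+1), x k • (Pi.single k 1 : Fin (m+1) → F)
            = Pi.single k (x k) := by
          intro k
          rw [← Pi.single_smul k (x k) 1, smul_eq_mul, mul_one]
        rw [Finset.sum_congr rfl (fun k _ => h1 k), Finset.univ_sum_single]
      rw [hx]
      exact Submodule.sum_mem _ fun k _ => Submodule.smul_mem _ _ (hek k)
  · -- the arithmetic characterization
    by_cases h0 : ringChar F = 0
    · haveI : CharP F 0 := h0 ▸ ringChar.charP F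
      haveI : CharZero F := CharP.charP_to_charZero F
      constructor
      · intro _
        exact Or.inl h0
      · intro _ k hk
        exact Nat.cast_ne_zero.mpr (Nat.choose_pos hk).ne'
    · haveI hcp : CharP F (ringChar F) := ringChar.charP F
      have hp : (ringChar F).Prime := by
        rcases CharP.char_is_prime_or_zero F (ringChar F) with h | h
        · exact h
        · exact absurd h h0
      set p := ringChar F with hpdef
      have hcast : ∀ n : ℕ, ((n:ℕ):F) = 0 ↔ p ∣ n := fun n => CharP.cast_eq_zero_iff F p n
      constructor
      · intro H
        obtain ⟨a, b, h1, h2, h3⟩ :=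
          nt_nec hp m (fun k hk hd => H k hk ((hcast _).mpr hd))
        exact Or.inr ⟨p, a, b, hp, rfl, h1, h2, h3⟩
      · rintro (h | ⟨p', a, b, hp', hc', hmb, hpb, hbp⟩)
        · exact absurd h h0
        · have hpp : p' = p := hc'.symm
          subst hpp
          intro k hk hcz
          exact nt_suff hp a b m hmb hbp k hk ((hcast _).mp hcz)
end
end

section
/- Let p be a prime and m ≥ 1. The binomial coefficients binom(m,0), …, binom(m,m) are all nonzero modulo p if and only if b < p, where m+1 = pᵃ·b is the factorization of m+1 with gcd(b,p) = 1. (Consequence of the identity lcm{binom(m,0),…,binom(m,m)} = lcm{1,…,m+1}/(m+1).) -/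
/-!
By Lucas' theorem, `p ∣ choose n k` for some `k ≤ n` unless every base-`p` digit of `n` is
`p - 1` except possibly the leading one. Since `m = pᵃ b - 1`, the lowest `a` digits of `m` are
`p - 1`, and stripping them leaves `b - 1`, whose last digit is not `p - 1` because `p ∤ b`; so
the remaining condition is that `b - 1` is a single digit, i.e. `b < p`.
-/

namespace Nat.Prime

variable {p n : ℕ}

theorem dvd_choose_iff_dvd_choose_mod_or_dvd_choose_div (hp : p.Prime) (k : ℕ) :
    p ∣ n.choose k ↔ p ∣ (n % p).choose (k % p) ∨ p ∣ (n / p).choose (k / p) := by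
  have := Fact.mk hp
  rw [(Choose.choose_modEq_choose_mod_mul_choose_div_nat (n := n) (k := k)).dvd_iff dvd_rfl,
    hp.dvd_mul]

theorem not_dvd_choose_of_lt (hp : p.Prime) (hn : n < p) {k : ℕ} (hk : k ≤ n) :
    ¬ p ∣ n.choose k :=
  hp.coprime_iff_not_dvd.1 (hp.coprime_choose_of_lt hn hk)

/-- Appending the digit `p - 1` to `n'` does not change whether some `choose n' j` is
divisible by `p`. -/
theorem forall_not_dvd_choose_iff_of_succ_eq_mul (hp : p.Prime) {n' : ℕ}
    (hn : n + 1 = p * (n' + 1)) :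
    (∀ k ≤ n, ¬ p ∣ n.choose k) ↔ ∀ j ≤ n', ¬ p ∣ n'.choose j := by
  have hp0 := hp.pos
  have hdigits : n = (p - 1) + p * n' := by
    rw [Nat.mul_add, mul_one] at hn
    omega
  have hmod : n % p = p - 1 := by
    rw [hdigits, Nat.add_mul_mod_self_left, Nat.mod_eq_of_lt (by omega)]
  have hdiv : n / p = n' := by
    rw [hdigits, Nat.add_mul_div_left _ _ hp0, Nat.div_eq_of_lt (by omega), zero_add]
  constructor
  · intro h j hj hdvd
    have hpj : p * j ≤ n := by nlinarith
    refine h (p * j) hpj ((hp.dvd_choose_iff_dvd_choose_mod_or_dvd_choose_div _).2 (Or.inr ?_))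
    rwa [hdiv, Nat.mul_div_cancel_left _ hp0]
  · intro h k hk hdvd
    rcases (hp.dvd_choose_iff_dvd_choose_mod_or_dvd_choose_div k).1 hdvd with hlow | hhigh
    · rw [hmod] at hlow
      exact hp.not_dvd_choose_of_lt (by omega) (by have := Nat.mod_lt k hp0; omega) hlow
    · rw [hdiv] at hhigh
      exact h _ (hdiv ▸ Nat.div_le_div_right hk) hhigh

theorem forall_not_dvd_choose_iff_lt_of_not_dvd_succ (hp : p.Prime) (hn : ¬ p ∣ n + 1) :
    (∀ k ≤ n, ¬ p ∣ n.choose k) ↔ n < p := by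
  refine ⟨fun h => ?_, fun hlt _ hk => hp.not_dvd_choose_of_lt hlt hk⟩
  by_contra! hpn
  have hp0 := hp.pos
  have hmod : n % p + 1 < p := by
    have hlt := Nat.mod_lt n hp0
    refine lt_of_le_of_ne hlt fun heq => hn ⟨n / p + 1, ?_⟩
    have := Nat.div_add_mod n p
    rw [Nat.mul_add, mul_one]
    omega
  -- `k = n % p + 1` exceeds the last digit of `n` without carrying into the next one.
  refine h (n % p + 1) (by omega) ((hp.dvd_choose_iff_dvd_choose_mod_or_dvd_choose_div _).2 ?_)
  left
  rw [Nat.mod_eq_of_lt hmod, Nat.choose_eq_zero_of_lt (Nat.lt_succ_self _)]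
  exact dvd_zero p

theorem forall_not_dvd_choose_iff_lt_of_succ_eq_pow_mul (hp : p.Prime) {a b : ℕ}
    (hb : ¬ p ∣ b) (hn : n + 1 = p ^ a * b) :
    (∀ k ≤ n, ¬ p ∣ n.choose k) ↔ b < p := by
  induction a generalizing n with
  | zero =>
    rw [pow_zero, one_mul] at hn
    subst hn
    rw [hp.forall_not_dvd_choose_iff_lt_of_not_dvd_succ hb]
    have : n + 1 ≠ p := fun h => hb (h ▸ dvd_rfl)
    omega
  | succ a ih =>
    have hpos : 0 < p ^ a * b :=
      Nat.mul_pos (pow_pos hp.pos a) (Nat.pos_of_ne_zero fun h => hb (h ▸ dvd_zero p))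
    rw [hp.forall_not_dvd_choose_iff_of_succ_eq_mul (n' := p ^ a * b - 1)
      (by rw [hn, Nat.sub_add_cancel hpos, pow_succ', mul_assoc])]
    exact ih (Nat.sub_add_cancel hpos)

end Nat.Prime

theorem stmt19_general (p m a b : ℕ) (hp : p.Prime)
    (hfact : m + 1 = p ^ a * b) (hb : ¬ p ∣ b) :
    (∀ k : ℕ, k ≤ m → ¬ p ∣ m.choose k) ↔ b < p :=
  hp.forall_not_dvd_choose_iff_lt_of_succ_eq_pow_mul hb hfact

/-- for a prime `p` and `m ≥ 1`, writing `m+1 = pᵃ·b` with `p ∤ b`: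
all binomial coefficients `binom(m,0), …, binom(m,m)` are nonzero modulo `p`
iff `b < p`. -/
theorem stmt19 (p m a b : ℕ) (hp : p.Prime) (hm : 1 ≤ m)
    (hfact : m + 1 = p ^ a * b) (hb : ¬ p ∣ b) :
    (∀ k : ℕ, k ≤ m → ¬ p ∣ m.choose k) ↔ b < p :=
  stmt19_general p m a b hp hfact hb
end
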